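/- arXiv:1009.3105 — 3 statements merged into one kernel-verified Lean document; each statement's English description precedes it below -/
import Mathlib

section
/- Let w ∈ 𝒲^k. Then H^k_w(ℝ³,ℝ³) = √w · H^k(ℝ³,ℝ³), i.e., f ∈ H^k_w if and only if √w · f ∈ H^k, and the norms ‖f‖_{H^k_w} and ‖√w f‖_{H^k} are equivalent. -/
open Real MeasureTheory

set_option maxHeartbeats 1000000

noncomputable section

abbrev E3 := EuclideanSpace ℝ (Fin 3)

lemma inv_deriv_bound (u : E3 → ℝ) (hu : ContDiff ℝ (⊤ : ℕ∞) u) (hupos : ∀ x, 0 < u x) (k : ℕ)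
    (hC : ∀ i, ∃ C, ∀ x, i ≤ k → ‖iteratedFDeriv ℝ i u x‖ ≤ C * u x) :
    ∀ n, n ≤ k → ∃ K, 0 ≤ K ∧
      ∀ x, ‖iteratedFDeriv ℝ n (fun y => (u y)⁻¹) x‖ ≤ K * (u x)⁻¹ := by
  choose Cu hCu using hC
  set v : E3 → ℝ := fun y => (u y)⁻¹ with hvdef
  have hune : ∀ x, u x ≠ 0 := fun x => (hupos x).ne'
  have hv : ContDiff ℝ (⊤ : ℕ∞) v := hu.inv hune
  have hvpos : ∀ x, 0 < v x := fun x => inv_pos.mpr (hupos x)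
  intro n
  induction n using Nat.strong_induction_on with
  | _ n ih =>
    intro hnk
    match n, ih, hnk with
    | 0, ih, hnk =>
      refine ⟨1, zero_le_one, fun x => ?_⟩
      simp [norm_iteratedFDeriv_zero, abs_of_pos (hvpos x)]
      exact le_rfl
    | (n+1), ih, hnk =>
      have ih' : ∀ a, ∃ K, 0 ≤ K ∧ ∀ x, a ≤ n →
          ‖iteratedFDeriv ℝ a v x‖ ≤ K * v x := by
        intro a
        by_cases h : a ≤ n
        · obtain ⟨K, hK0, hK⟩ := ih a (Nat.lt_succ_of_le h)
            (h.trans (Nat.le_of_succ_le hnk))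
          exact ⟨K, hK0, fun x _ => hK x⟩
        · exact ⟨0, le_refl 0, fun x h' => absurd h' h⟩
      choose Kf hKf0 hKf using ih'
      set KA : ℝ := ∑ a ∈ Finset.range (n+1), Kf a with hKAdef
      have hKA0 : 0 ≤ KA := Finset.sum_nonneg fun a _ => hKf0 a
      have hKA : ∀ a ≤ n, Kf a ≤ KA := fun a ha =>
        Finset.single_le_sum (fun b _ => hKf0 b) (Finset.mem_range.mpr (Nat.lt_succ_of_le ha))
      set CU : ℝ := ∑ i ∈ Finset.range (n+2), |Cu i| with hCUdef
      have hCU0 : 0 ≤ CU := Finset.sum_nonneg fun i _ => abs_nonneg _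
      have hCU : ∀ i ≤ n+1, ∀ x, ‖iteratedFDeriv ℝ i u x‖ ≤ CU * u x := by
        intro i hi x
        have h1 : ‖iteratedFDeriv ℝ i u x‖ ≤ Cu i * u x := hCu i x (hi.trans hnk)
        have h2 : Cu i ≤ |Cu i| := le_abs_self _
        have h3 : |Cu i| ≤ CU :=
          Finset.single_le_sum (fun b _ => abs_nonneg (Cu b))
            (Finset.mem_range.mpr (Nat.lt_succ_of_le hi))
        nlinarith [(hupos x).le]
      -- fderiv of v
      have hfd : fderiv ℝ v = fun y => (-(v y * v y)) • fderiv ℝ u y := by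
        funext x
        have hd : HasFDerivAt v ((-(u x ^ 2)⁻¹) • fderiv ℝ u x) x :=
          (hasDerivAt_inv (hune x)).comp_hasFDerivAt x
            ((hu.differentiable (by simp)) x).hasFDerivAt
        rw [hd.fderiv]
        congr 1
        rw [sq, mul_inv]
      -- bound on derivatives of the scalar -(v*v)
      have hsb : ∀ j ≤ n, ∀ x,
          ‖iteratedFDeriv ℝ j (fun y => -(v y * v y)) x‖ ≤ 2^n * KA^2 * (v x)^2 := by
        intro j hj x
        have hneg : iteratedFDeriv ℝ j (fun y => -(v y * v y)) x
            = -iteratedFDeriv ℝ j (fun y => v y * v y) x := by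
          have : (fun y => -(v y * v y)) = -(fun y => v y * v y) := rfl
          rw [this, iteratedFDeriv_neg_apply]
        rw [hneg, norm_neg]
        calc ‖iteratedFDeriv ℝ j (fun y => v y * v y) x‖
            ≤ ∑ a ∈ Finset.range (j+1), (j.choose a : ℝ) *
              ‖iteratedFDeriv ℝ a v x‖ * ‖iteratedFDeriv ℝ (j-a) v x‖ :=
              norm_iteratedFDeriv_mul_le hv hv x (by exact_mod_cast le_top)
          _ ≤ ∑ a ∈ Finset.range (j+1), (j.choose a : ℝ) * (KA * v x) * (KA * v x) := by
              refine Finset.sum_le_sum fun a ha => ?_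
              have haj : a ≤ j := Nat.lt_succ_iff.mp (Finset.mem_range.mp ha)
              have h1 : ‖iteratedFDeriv ℝ a v x‖ ≤ KA * v x := by
                have := hKf a x (haj.trans hj)
                nlinarith [hKA a (haj.trans hj), (hvpos x).le]
              have h2 : ‖iteratedFDeriv ℝ (j-a) v x‖ ≤ KA * v x := by
                have hja : j - a ≤ n := (Nat.sub_le j a).trans hj
                have := hKf (j-a) x hja
                nlinarith [hKA (j-a) hja, (hvpos x).le]
              have hn1 : (0:ℝ) ≤ (j.choose a : ℝ) := Nat.cast_nonneg _
              exact mul_le_mul (mul_le_mul_of_nonneg_left h1 hn1) h2 (norm_nonneg _)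
                (mul_nonneg hn1 (mul_nonneg hKA0 (hvpos x).le))
          _ = (∑ a ∈ Finset.range (j+1), (j.choose a : ℝ)) * ((KA * v x) * (KA * v x)) := by
              simp_rw [mul_assoc]; rw [← Finset.sum_mul]
          _ ≤ 2^n * KA^2 * (v x)^2 := by
              have : (∑ a ∈ Finset.range (j+1), (j.choose a : ℝ)) = 2^j := by
                rw [← Nat.cast_sum]
                rw [Nat.sum_range_choose]
                push_cast; ring
              rw [this]
              have h2j : (2:ℝ)^j ≤ 2^n := pow_le_pow_right₀ one_le_two hj
              nlinarith [(hvpos x).le, hKA0, pow_nonneg (le_of_lt (by positivity : (0:ℝ) < 2)) j]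
      refine ⟨2^n * (2^n * KA^2 * CU), by positivity, fun x => ?_⟩
      have key : ‖iteratedFDeriv ℝ (n+1) v x‖
          = ‖iteratedFDeriv ℝ n (fun y => (-(v y * v y)) • fderiv ℝ u y) x‖ := by
        rw [← norm_iteratedFDeriv_fderiv, hfd]
      rw [key]
      have hF : ContDiff ℝ (n:ℕ∞) (fderiv ℝ u) := hu.fderiv_right (by exact_mod_cast le_top)
      have hs : ContDiff ℝ (n:ℕ∞) (fun y => -(v y * v y)) :=
        ((hv.mul hv).neg).of_le (by exact_mod_cast le_top)
      calc ‖iteratedFDeriv ℝ n (fun y => (-(v y * v y)) • fderiv ℝ u y) x‖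
          ≤ ∑ j ∈ Finset.range (n+1), (n.choose j : ℝ) *
            ‖iteratedFDeriv ℝ j (fun y => -(v y * v y)) x‖ *
            ‖iteratedFDeriv ℝ (n-j) (fderiv ℝ u) x‖ :=
            norm_iteratedFDeriv_smul_le hs hF x le_rfl
        _ ≤ ∑ j ∈ Finset.range (n+1), (n.choose j : ℝ) *
            ((2^n * KA^2 * (v x)^2) * (CU * u x)) := by
            refine Finset.sum_le_sum fun j hjm => ?_
            have hjn : j ≤ n := Nat.lt_succ_iff.mp (Finset.mem_range.mp hjm)
            have h1 := hsb j hjn x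
            have h2 : ‖iteratedFDeriv ℝ (n-j) (fderiv ℝ u) x‖ ≤ CU * u x := by
              rw [norm_iteratedFDeriv_fderiv]
              exact hCU (n-j+1) (by omega) x
            have hn1 : (0:ℝ) ≤ (n.choose j : ℝ) := Nat.cast_nonneg _
            have := norm_nonneg (iteratedFDeriv ℝ j (fun y => -(v y * v y)) x)
            have := norm_nonneg (iteratedFDeriv ℝ (n-j) (fderiv ℝ u) x)
            have hvx := (hvpos x).le
            have hux := (hupos x).le
            rw [mul_assoc]
            refine mul_le_mul_of_nonneg_left ?_ hn1
            exact mul_le_mul h1 h2 (norm_nonneg _) (by positivity)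
        _ = 2^n * ((2^n * KA^2 * (v x)^2) * (CU * u x)) := by
            rw [← Finset.sum_mul]
            congr 1
            rw [← Nat.cast_sum, Nat.sum_range_choose]; push_cast; ring
        _ = 2^n * (2^n * KA^2 * CU) * ((v x)^2 * u x) := by ring
        _ = 2^n * (2^n * KA^2 * CU) * v x := by
            congr 1
            show ((u x)⁻¹)^2 * u x = (u x)⁻¹
            rw [sq, mul_assoc, inv_mul_cancel₀ (hune x), mul_one]

lemma pointwise_bound (u : E3 → ℝ) (hu : ContDiff ℝ (⊤ : ℕ∞) u) (g : E3 → E3) (hg : ContDiff ℝ (⊤ : ℕ∞) g)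
    (k i : ℕ) (hik : i ≤ k) (A : ℝ) (hA0 : 0 ≤ A) (b : E3 → ℝ) (hb : ∀ x, 0 ≤ b x)
    (hbound : ∀ j ≤ k, ∀ x, ‖iteratedFDeriv ℝ j u x‖ ≤ A * b x) (x : E3) :
    ‖iteratedFDeriv ℝ i (fun y => u y • g y) x‖^2 ≤
      (k+1) * (2^k * A)^2 *
        ∑ j ∈ Finset.range (k+1), (b x * ‖iteratedFDeriv ℝ j g x‖)^2 := by
  have h1 : ‖iteratedFDeriv ℝ i (fun y => u y • g y) x‖ ≤
      (2^k * A) * ∑ j ∈ Finset.range (i+1), b x * ‖iteratedFDeriv ℝ (i-j) g x‖ := by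
    calc ‖iteratedFDeriv ℝ i (fun y => u y • g y) x‖
        ≤ ∑ j ∈ Finset.range (i+1), (i.choose j : ℝ) *
          ‖iteratedFDeriv ℝ j u x‖ * ‖iteratedFDeriv ℝ (i-j) g x‖ :=
          norm_iteratedFDeriv_smul_le hu hg x (by exact_mod_cast le_top)
      _ ≤ ∑ j ∈ Finset.range (i+1), (2^k * A) * (b x * ‖iteratedFDeriv ℝ (i-j) g x‖) := by
          refine Finset.sum_le_sum fun j hj => ?_
          have hji : j ≤ i := Nat.lt_succ_iff.mp (Finset.mem_range.mp hj)
          have hc : (i.choose j : ℝ) ≤ 2^k := by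
            have h1 : i.choose j ≤ 2^i := by
              rw [← Nat.sum_range_choose i]
              exact Finset.single_le_sum (fun b _ => Nat.zero_le _) hj
            calc (i.choose j : ℝ) ≤ ((2^i : ℕ) : ℝ) := by exact_mod_cast h1
              _ ≤ 2^k := by push_cast; exact pow_le_pow_right₀ one_le_two hik
          have hbd := hbound j (hji.trans hik) x
          have hg0 := norm_nonneg (iteratedFDeriv ℝ (i-j) g x)
          calc (i.choose j : ℝ) * ‖iteratedFDeriv ℝ j u x‖ * ‖iteratedFDeriv ℝ (i-j) g x‖
              ≤ (2^k * (A * b x)) * ‖iteratedFDeriv ℝ (i-j) g x‖ :=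
                mul_le_mul_of_nonneg_right
                  (mul_le_mul hc hbd (norm_nonneg _) (by positivity)) hg0
            _ = 2^k * A * (b x * ‖iteratedFDeriv ℝ (i-j) g x‖) := by ring
      _ = (2^k * A) * ∑ j ∈ Finset.range (i+1), b x * ‖iteratedFDeriv ℝ (i-j) g x‖ := by
          rw [Finset.mul_sum]
  have h2 : ‖iteratedFDeriv ℝ i (fun y => u y • g y) x‖^2 ≤
      ((2^k * A) * ∑ j ∈ Finset.range (i+1), b x * ‖iteratedFDeriv ℝ (i-j) g x‖)^2 := by
    apply pow_le_pow_left₀ (norm_nonneg _) h1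
  refine h2.trans ?_
  rw [mul_pow]
  have h3 : (∑ j ∈ Finset.range (i+1), b x * ‖iteratedFDeriv ℝ (i-j) g x‖)^2 ≤
      (i+1) * ∑ j ∈ Finset.range (i+1), (b x * ‖iteratedFDeriv ℝ (i-j) g x‖)^2 := by
    have := sq_sum_le_card_mul_sum_sq
      (s := Finset.range (i+1)) (f := fun j => b x * ‖iteratedFDeriv ℝ (i-j) g x‖)
    simpa using this
  have h4 : ∑ j ∈ Finset.range (i+1), (b x * ‖iteratedFDeriv ℝ (i-j) g x‖)^2 =
      ∑ j ∈ Finset.range (i+1), (b x * ‖iteratedFDeriv ℝ j g x‖)^2 := by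
    have := Finset.sum_range_reflect (fun j => (b x * ‖iteratedFDeriv ℝ j g x‖)^2) (i+1)
    rw [← this]
    simp
  have h5 : ∑ j ∈ Finset.range (i+1), (b x * ‖iteratedFDeriv ℝ j g x‖)^2 ≤
      ∑ j ∈ Finset.range (k+1), (b x * ‖iteratedFDeriv ℝ j g x‖)^2 :=
    Finset.sum_le_sum_of_subset_of_nonneg
      (Finset.range_subset_range.mpr (by omega)) (fun j _ _ => sq_nonneg _)
  rw [h4] at h3
  have h6 : ((i:ℝ)+1) ≤ ((k:ℝ)+1) := by exact_mod_cast Nat.succ_le_succ hik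
  have hS0' : 0 ≤ ∑ j ∈ Finset.range (i+1), (b x * ‖iteratedFDeriv ℝ j g x‖)^2 :=
    Finset.sum_nonneg fun j _ => sq_nonneg _
  calc (2^k * A)^2 * (∑ j ∈ Finset.range (i+1), b x * ‖iteratedFDeriv ℝ (i-j) g x‖)^2
      ≤ (2^k * A)^2 * (((i:ℝ)+1) * ∑ j ∈ Finset.range (i+1),
          (b x * ‖iteratedFDeriv ℝ j g x‖)^2) :=
        mul_le_mul_of_nonneg_left h3 (sq_nonneg _)
    _ ≤ (2^k * A)^2 * (((k:ℝ)+1) * ∑ j ∈ Finset.range (k+1),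
          (b x * ‖iteratedFDeriv ℝ j g x‖)^2) := by
        refine mul_le_mul_of_nonneg_left ?_ (sq_nonneg _)
        exact mul_le_mul h6 h5 hS0' (by positivity)
    _ = ((k:ℝ)+1) * (2^k * A)^2 * ∑ j ∈ Finset.range (k+1),
          (b x * ‖iteratedFDeriv ℝ j g x‖)^2 := by ring

lemma lint_le_aux {m : ℕ} (B : ℝ) (hB : 0 ≤ B) (P : E3 → ℝ) (Q : ℕ → E3 → ℝ)
    (hQm : ∀ j, Measurable (Q j)) (hQ0 : ∀ j x, 0 ≤ Q j x)
    (h : ∀ x, P x ≤ B * ∑ j ∈ Finset.range m, Q j x) :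
    ∫⁻ x, ENNReal.ofReal (P x) ≤
      ENNReal.ofReal B * ∑ j ∈ Finset.range m, ∫⁻ x, ENNReal.ofReal (Q j x) := by
  calc ∫⁻ x, ENNReal.ofReal (P x)
      ≤ ∫⁻ x, ENNReal.ofReal (B * ∑ j ∈ Finset.range m, Q j x) :=
        lintegral_mono fun x => ENNReal.ofReal_le_ofReal (h x)
    _ = ∫⁻ x, ENNReal.ofReal B * ∑ j ∈ Finset.range m, ENNReal.ofReal (Q j x) := by
        refine lintegral_congr fun x => ?_
        rw [ENNReal.ofReal_mul hB, ENNReal.ofReal_sum_of_nonneg (fun j _ => hQ0 j x)]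
    _ = ENNReal.ofReal B * ∫⁻ x, ∑ j ∈ Finset.range m, ENNReal.ofReal (Q j x) :=
        lintegral_const_mul' _ _ ENNReal.ofReal_ne_top
    _ = ENNReal.ofReal B * ∑ j ∈ Finset.range m, ∫⁻ x, ENNReal.ofReal (Q j x) := by
        rw [lintegral_finset_sum _ (fun j _ => (hQm j).ennreal_ofReal)]

/-- For `w ∈ 𝒲^k`, one has `H^k_w = √w · H^k`: the weighted Sobolev (squared) norm of `f`
is equivalent to the unweighted Sobolev norm of `√w · f`. -/
theorem weighted_sobolev_eq_sqrtw_sobolev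
    (w : E3 → ℝ)
    (hsmooth : ContDiff ℝ (⊤ : ℕ∞) w) (hpos : ∀ x, 0 < w x)
    (Cw : ℝ) (hCw : 0 ≤ Cw) (Pw : ℕ)
    (hgrow : ∀ x y, w (x + y) ≤ (1 + Cw * ‖y‖) ^ Pw * w x)
    (k : ℕ)
    (hWk : ∀ i ≤ k, ∃ Ci : ℝ, ∀ x,
      ‖iteratedFDeriv ℝ i (fun y => Real.sqrt (w y)) x‖ ≤ Ci * Real.sqrt (w x)) :
    ∃ c C : ℝ, 0 < c ∧ 0 ≤ C ∧ ∀ f : E3 → E3, ContDiff ℝ (⊤ : ℕ∞) f →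
      (ENNReal.ofReal c *
          ∑ i ∈ Finset.range (k + 1),
            ∫⁻ x, ENNReal.ofReal (w x * ‖iteratedFDeriv ℝ i f x‖ ^ 2) ≤
        ∑ i ∈ Finset.range (k + 1),
          ∫⁻ x, ENNReal.ofReal
            (‖iteratedFDeriv ℝ i (fun y => Real.sqrt (w y) • f y) x‖ ^ 2)) ∧
      (∑ i ∈ Finset.range (k + 1),
          ∫⁻ x, ENNReal.ofReal
            (‖iteratedFDeriv ℝ i (fun y => Real.sqrt (w y) • f y) x‖ ^ 2) ≤
        ENNReal.ofReal C *
          ∑ i ∈ Finset.range (k + 1),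
            ∫⁻ x, ENNReal.ofReal (w x * ‖iteratedFDeriv ℝ i f x‖ ^ 2)) := by
  have hwne : ∀ x, w x ≠ 0 := fun x => (hpos x).ne'
  have hu : ContDiff ℝ (⊤ : ℕ∞) (fun y => Real.sqrt (w y)) := hsmooth.sqrt hwne
  have hupos : ∀ x, 0 < Real.sqrt (w x) := fun x => Real.sqrt_pos.mpr (hpos x)
  have hune : ∀ x, Real.sqrt (w x) ≠ 0 := fun x => (hupos x).ne'
  -- uniform constant A for derivatives of √w
  have hCu : ∀ i, ∃ C, ∀ x, i ≤ k →
      ‖iteratedFDeriv ℝ i (fun y => Real.sqrt (w y)) x‖ ≤ C * Real.sqrt (w x) := by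
    intro i
    by_cases h : i ≤ k
    · obtain ⟨Ci, hCi⟩ := hWk i h
      exact ⟨Ci, fun x _ => hCi x⟩
    · exact ⟨0, fun x h' => absurd h' h⟩
  choose Cu hCuS using hCu
  set A : ℝ := ∑ i ∈ Finset.range (k+1), |Cu i| with hAdef
  have hA0 : 0 ≤ A := Finset.sum_nonneg fun i _ => abs_nonneg _
  have hA : ∀ j ≤ k, ∀ x,
      ‖iteratedFDeriv ℝ j (fun y => Real.sqrt (w y)) x‖ ≤ A * Real.sqrt (w x) := by
    intro j hj x
    have h1 := hCuS j x hj
    have h2 : Cu j ≤ |Cu j| := le_abs_self _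
    have h3 : |Cu j| ≤ A :=
      Finset.single_le_sum (fun b _ => abs_nonneg (Cu b))
        (Finset.mem_range.mpr (Nat.lt_succ_of_le hj))
    nlinarith [(hupos x).le]
  -- uniform constant KK for derivatives of 1/√w
  have hv : ContDiff ℝ (⊤ : ℕ∞) (fun y => (Real.sqrt (w y))⁻¹) := hu.inv hune
  have hvpos : ∀ x, 0 < (Real.sqrt (w x))⁻¹ := fun x => inv_pos.mpr (hupos x)
  have hKex : ∀ n, ∃ K, 0 ≤ K ∧ ∀ x, n ≤ k →
      ‖iteratedFDeriv ℝ n (fun y => (Real.sqrt (w y))⁻¹) x‖ ≤ K * (Real.sqrt (w x))⁻¹ := by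
    intro n
    by_cases h : n ≤ k
    · obtain ⟨K, hK0, hK⟩ := inv_deriv_bound (fun y => Real.sqrt (w y)) hu hupos k
        (fun i => ⟨A, fun x hik => hA i hik x⟩) n h
      exact ⟨K, hK0, fun x _ => hK x⟩
    · exact ⟨0, le_refl 0, fun x h' => absurd h' h⟩
  choose Kf hKf0 hKfS using hKex
  set KK : ℝ := ∑ n ∈ Finset.range (k+1), Kf n with hKKdef
  have hKK0 : 0 ≤ KK := Finset.sum_nonneg fun n _ => hKf0 n
  have hKK : ∀ j ≤ k, ∀ x,
      ‖iteratedFDeriv ℝ j (fun y => (Real.sqrt (w y))⁻¹) x‖ ≤ KK * (Real.sqrt (w x))⁻¹ := by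
    intro j hj x
    have h1 := hKfS j x hj
    have h3 : Kf j ≤ KK :=
      Finset.single_le_sum (fun b _ => hKf0 b) (Finset.mem_range.mpr (Nat.lt_succ_of_le hj))
    nlinarith [(hvpos x).le]
  -- constants
  set Bup : ℝ := ((k:ℝ)+1) * (2^k * A)^2 with hBupdef
  have hBup0 : 0 ≤ Bup := by positivity
  set Blow : ℝ := ((k:ℝ)+1) * (2^k * KK)^2 + 1 with hBlowdef
  have hBlow1 : 1 ≤ Blow := by
    rw [hBlowdef]; exact le_add_of_nonneg_left (by positivity)
  have hBlow0 : 0 < Blow := lt_of_lt_of_le one_pos hBlow1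
  have hkB : 0 < ((k:ℝ)+1) * Blow := mul_pos (by positivity) hBlow0
  have hofk : ENNReal.ofReal ((k:ℝ)+1) = ((k:ℕ)+1 : ENNReal) := by
    rw [ENNReal.ofReal_add (by positivity) zero_le_one, ENNReal.ofReal_natCast,
      ENNReal.ofReal_one]
  refine ⟨(((k:ℝ)+1) * Blow)⁻¹, ((k:ℝ)+1) * Bup, inv_pos.mpr hkB,
    mul_nonneg (by positivity) hBup0, fun f hf => ?_⟩
  have hg : ContDiff ℝ (⊤ : ℕ∞) (fun y => Real.sqrt (w y) • f y) := hu.smul hf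
  -- measurability
  have hQm : ∀ j : ℕ, Measurable (fun x => w x * ‖iteratedFDeriv ℝ j f x‖^2) := fun j =>
    (hsmooth.continuous.mul
      (((hf.continuous_iteratedFDeriv (by exact_mod_cast le_top)).norm).pow 2)).measurable
  have hRm : ∀ j : ℕ, Measurable
      (fun x => ‖iteratedFDeriv ℝ j (fun y => Real.sqrt (w y) • f y) x‖^2) := fun j =>
    (((hg.continuous_iteratedFDeriv (by exact_mod_cast le_top)).norm).pow 2).measurable
  have hQ0 : ∀ (j : ℕ) x, 0 ≤ w x * ‖iteratedFDeriv ℝ j f x‖^2 := fun j x =>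
    mul_nonneg (hpos x).le (sq_nonneg _)
  have hR0 : ∀ (j : ℕ) x,
      0 ≤ ‖iteratedFDeriv ℝ j (fun y => Real.sqrt (w y) • f y) x‖^2 := fun j x => sq_nonneg _
  set S : ENNReal := ∑ j ∈ Finset.range (k+1),
    ∫⁻ x, ENNReal.ofReal (w x * ‖iteratedFDeriv ℝ j f x‖^2) with hSdef
  set T : ENNReal := ∑ j ∈ Finset.range (k+1),
    ∫⁻ x, ENNReal.ofReal (‖iteratedFDeriv ℝ j (fun y => Real.sqrt (w y) • f y) x‖^2)
    with hTdef
  constructor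
  · -- lower bound: ofReal c * S ≤ T
    have hfeq : (fun y => (Real.sqrt (w y))⁻¹ • Real.sqrt (w y) • f y) = f := by
      funext y
      rw [smul_smul, inv_mul_cancel₀ (hune y), one_smul]
    have hptw : ∀ i ≤ k, ∀ x, w x * ‖iteratedFDeriv ℝ i f x‖^2 ≤
        Blow * ∑ j ∈ Finset.range (k+1),
          ‖iteratedFDeriv ℝ j (fun y => Real.sqrt (w y) • f y) x‖^2 := by
      intro i hik x
      have h0 := pointwise_bound (fun y => (Real.sqrt (w y))⁻¹) hv
        (fun y => Real.sqrt (w y) • f y) hg k i hik KK hKK0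
        (fun y => (Real.sqrt (w y))⁻¹) (fun x => (hvpos x).le) hKK x
      beta_reduce at h0
      rw [hfeq] at h0
      have h1 : w x * ‖iteratedFDeriv ℝ i f x‖^2 ≤
          w x * (((k:ℝ)+1) * (2^k * KK)^2 * ∑ j ∈ Finset.range (k+1),
            ((Real.sqrt (w x))⁻¹ *
              ‖iteratedFDeriv ℝ j (fun y => Real.sqrt (w y) • f y) x‖)^2) :=
        mul_le_mul_of_nonneg_left h0 (hpos x).le
      have h2 : w x * (((k:ℝ)+1) * (2^k * KK)^2 * ∑ j ∈ Finset.range (k+1),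
            ((Real.sqrt (w x))⁻¹ *
              ‖iteratedFDeriv ℝ j (fun y => Real.sqrt (w y) • f y) x‖)^2) =
          ((k:ℝ)+1) * (2^k * KK)^2 * ∑ j ∈ Finset.range (k+1),
            ‖iteratedFDeriv ℝ j (fun y => Real.sqrt (w y) • f y) x‖^2 := by
        rw [mul_left_comm]
        congr 1
        rw [Finset.mul_sum]
        refine Finset.sum_congr rfl fun j _ => ?_
        rw [mul_pow, ← mul_assoc]
        have hwv : w x * ((Real.sqrt (w x))⁻¹)^2 = 1 := by
          rw [inv_pow, Real.sq_sqrt (hpos x).le, mul_inv_cancel₀ (hwne x)]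
        rw [hwv, one_mul]
      rw [h2] at h1
      refine h1.trans ?_
      have hsum0 : 0 ≤ ∑ j ∈ Finset.range (k+1),
          ‖iteratedFDeriv ℝ j (fun y => Real.sqrt (w y) • f y) x‖^2 :=
        Finset.sum_nonneg fun j _ => sq_nonneg _
      have : ((k:ℝ)+1) * (2^k * KK)^2 ≤ Blow := by rw [hBlowdef]; linarith
      exact mul_le_mul_of_nonneg_right this hsum0
    have hlint : ∀ i ∈ Finset.range (k+1),
        ∫⁻ x, ENNReal.ofReal (w x * ‖iteratedFDeriv ℝ i f x‖^2) ≤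
          ENNReal.ofReal Blow * T := by
      intro i hi
      exact lint_le_aux Blow hBlow0.le _ _ hRm hR0
        (hptw i (Nat.lt_succ_iff.mp (Finset.mem_range.mp hi)))
    have hST : S ≤ ((k:ℕ)+1 : ENNReal) * (ENNReal.ofReal Blow * T) := by
      calc S ≤ ∑ _i ∈ Finset.range (k+1), ENNReal.ofReal Blow * T :=
            Finset.sum_le_sum hlint
        _ = ((k:ℕ)+1 : ENNReal) * (ENNReal.ofReal Blow * T) := by
            rw [Finset.sum_const, Finset.card_range, nsmul_eq_mul]
            push_cast; ring
    calc ENNReal.ofReal (((k:ℝ)+1) * Blow)⁻¹ * S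
        ≤ ENNReal.ofReal (((k:ℝ)+1) * Blow)⁻¹ *
            (((k:ℕ)+1 : ENNReal) * (ENNReal.ofReal Blow * T)) := mul_le_mul_right hST _
      _ = (ENNReal.ofReal (((k:ℝ)+1) * Blow)⁻¹ * ENNReal.ofReal (((k:ℝ)+1) * Blow)) * T := by
          have hc1 : ((k:ℕ)+1 : ENNReal) * ENNReal.ofReal Blow
              = ENNReal.ofReal (((k:ℝ)+1) * Blow) := by
            rw [ENNReal.ofReal_mul (by positivity : (0:ℝ) ≤ (k:ℝ)+1), hofk]
          rw [← mul_assoc, mul_assoc (ENNReal.ofReal _), ← hc1]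
          ring
      _ = T := by
          rw [← ENNReal.ofReal_mul (by positivity)]
          rw [inv_mul_cancel₀ hkB.ne']
          simp
  · -- upper bound: T ≤ ofReal C * S
    have hptw : ∀ i ≤ k, ∀ x,
        ‖iteratedFDeriv ℝ i (fun y => Real.sqrt (w y) • f y) x‖^2 ≤
          Bup * ∑ j ∈ Finset.range (k+1), w x * ‖iteratedFDeriv ℝ j f x‖^2 := by
      intro i hik x
      have h0 := pointwise_bound (fun y => Real.sqrt (w y)) hu f hf k i hik A hA0
        (fun y => Real.sqrt (w y)) (fun x => (hupos x).le) hA x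
      beta_reduce at h0
      refine h0.trans ?_
      rw [hBupdef]
      refine mul_le_mul_of_nonneg_left ?_ (by positivity)
      refine Finset.sum_le_sum fun j _ => ?_
      rw [mul_pow, Real.sq_sqrt (hpos x).le]
    have hlint : ∀ i ∈ Finset.range (k+1),
        ∫⁻ x, ENNReal.ofReal
          (‖iteratedFDeriv ℝ i (fun y => Real.sqrt (w y) • f y) x‖^2) ≤
          ENNReal.ofReal Bup * S := by
      intro i hi
      exact lint_le_aux Bup hBup0 _ _ hQm hQ0
        (hptw i (Nat.lt_succ_iff.mp (Finset.mem_range.mp hi)))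
    calc T ≤ ∑ _i ∈ Finset.range (k+1), ENNReal.ofReal Bup * S :=
          Finset.sum_le_sum hlint
      _ = ((k:ℕ)+1 : ENNReal) * (ENNReal.ofReal Bup * S) := by
          rw [Finset.sum_const, Finset.card_range, nsmul_eq_mul]
          push_cast; ring
      _ = ENNReal.ofReal (((k:ℝ)+1) * Bup) * S := by
          have hc2 : ENNReal.ofReal (((k:ℝ)+1) * Bup)
              = ((k:ℕ)+1 : ENNReal) * ENNReal.ofReal Bup := by
            rw [ENNReal.ofReal_mul (by positivity : (0:ℝ) ≤ (k:ℝ)+1), hofk]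
          rw [hc2, mul_assoc]
end
end

section
/- Let A be a closed densely defined operator on a Banach space 𝓑 such that all real λ with |λ| > γ lie in the resolvent set and ‖(λ−A)⁻¹‖ ≤ (|λ|−γ)⁻¹. Then A generates a γ-contractive one-parameter group (W_t)_{t∈ℝ} on 𝓑: W_0 = id, W_{t+s} = W_t W_s, t ↦ W_t φ is C¹ with values in D(A) and d/dt W_t φ = A W_t φ for φ ∈ D(A), and ‖W_t φ‖ ≤ e^{γ|t|}‖φ‖ for all φ ∈ 𝓑 and t ∈ ℝ. -/
/-!
Put `λ_n = γ + n + 1`, `R_n = (λ_n - A)⁻¹` and let `A_n = λ_n² R_n - λ_n = λ_n A R_n` be the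
Yosida approximations of `A`. They are bounded and commute, `‖exp (t A_n)‖ ≤ e^{(γ + γ²/(n+1)) t}`
for `t ≥ 0`, and `A_n φ → A φ` on the domain because `λ_n R_n → 1` strongly (by density, the
`λ_n R_n` being uniformly bounded). The Duhamel estimate
`‖exp (t A_n) φ - exp (t A_m) φ‖ ≤ e^{c t} t ‖A_n φ - A_m φ‖` makes `exp (t A_n)` converge strongly
to a semigroup `S_A(t)`, `t ≥ 0`, with `‖S_A(t)‖ ≤ e^{γ t}`, leaving the domain invariant and
solving `S_A(t) φ = φ + ∫₀ᵗ S_A(s) A φ ds`. The same applies to `-A`, and `t ↦ S_A(t) S_{-A}(t) φ`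
has derivative `S_A A S_{-A} φ - S_A A S_{-A} φ = 0`, so `S_{-A}(t) = S_A(t)⁻¹`. Hence `S_A` on
`[0, ∞)` glued with `t ↦ S_{-A}(-t)` on `(-∞, 0]` is a group.
-/

open Real Filter Set Topology

noncomputable section

namespace HilleYosida

section Glue

variable {M : Type*} [Monoid M]

def glue (S T : ℝ → M) (t : ℝ) : M := if 0 ≤ t then S t else T (-t)

lemma glue_sub {S T : ℝ → M}
    (hS : ∀ s t, 0 ≤ s → 0 ≤ t → S (s + t) = S s * S t)
    (hT : ∀ s t, 0 ≤ s → 0 ≤ t → T (s + t) = T s * T t)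
    (hST : ∀ r, 0 ≤ r → S r * T r = 1) {a b : ℝ} (ha : 0 ≤ a) (hb : 0 ≤ b) :
    glue S T (a - b) = S a * T b := by
  unfold glue
  split_ifs with hab
  · rw [show S a = S (a - b) * S b by simpa using hS (a - b) b hab hb, mul_assoc, hST b hb,
      mul_one]
  · rw [show T b = T a * T (-(a - b)) by simpa using hT a (-(a - b)) ha (by linarith),
      ← mul_assoc, hST a ha, one_mul]

lemma glue_add {S T : ℝ → M}
    (hS : ∀ s t, 0 ≤ s → 0 ≤ t → S (s + t) = S s * S t)
    (hT : ∀ s t, 0 ≤ s → 0 ≤ t → T (s + t) = T s * T t)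
    (hST : ∀ r, 0 ≤ r → S r * T r = 1) (hTS : ∀ r, 0 ≤ r → T r * S r = 1) (s t : ℝ) :
    glue S T (s + t) = glue S T s * glue S T t := by
  -- write `s = (s + r) - r`, `t = r - (r - t)` with a common `r` making every time nonnegative
  set r := max (max (-s) t) 0
  have hs : 0 ≤ s + r := by linarith [le_max_left (-s) t, le_max_left (max (-s) t) 0]
  have ht : 0 ≤ r - t := by linarith [le_max_right (-s) t, le_max_left (max (-s) t) 0]
  have hr : 0 ≤ r := le_max_right _ _
  have es : glue S T s = S (s + r) * T r := by simpa using glue_sub hS hT hST hs hr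
  have et : glue S T t = S r * T (r - t) := by simpa using glue_sub hS hT hST hr ht
  have est : glue S T (s + t) = S (s + r) * T (r - t) := by
    rw [← glue_sub hS hT hST hs ht]; ring_nf
  rw [est, es, et, mul_assoc, ← mul_assoc (T r), hTS r hr, one_mul]

end Glue

variable {B : Type*} [NormedAddCommGroup B] [NormedSpace ℝ B]

section Dense

lemma tendsto_apply_of_dense {ι : Type*} {l : Filter ι} {F : ι → B →L[ℝ] B} {G : B →L[ℝ] B}
    {s : Set B} (hs : Dense s) {C : ℝ} (hF : ∀ i, ‖F i‖ ≤ C)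
    (hFs : ∀ x ∈ s, Tendsto (F · x) l (𝓝 (G x))) (x : B) :
    Tendsto (F · x) l (𝓝 (G x)) := by
  have hequi : Equicontinuous ((↑) ∘ F) := ((NormedSpace.equicontinuous_TFAE F).out 5 1).mp
    (show ∃ C, ∀ i, ‖F i‖ ≤ C from ⟨C, hF⟩)
  exact (hequi.isClosed_setOfPred_tendsto G.continuous).closure_subset_iff.2 hFs (hs x)

lemma cauchySeq_apply_of_dense {F : ℕ → B →L[ℝ] B} {s : Set B} (hs : Dense s) {C : ℝ}
    (hF : ∀ n, ‖F n‖ ≤ C) (hFs : ∀ x ∈ s, CauchySeq (F · x)) (x : B) :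
    CauchySeq (F · x) := by
  rw [Metric.cauchySeq_iff']
  intro ε hε
  have hC : 0 < C + 1 := by linarith [(norm_nonneg _).trans (hF 0)]
  obtain ⟨y, hxy, hy⟩ := Metric.dense_iff.1 hs x (ε / (3 * (C + 1))) (by positivity)
  rw [Metric.mem_ball, dist_comm, dist_eq_norm] at hxy
  obtain ⟨N, hN⟩ := Metric.cauchySeq_iff'.1 (hFs y hy) (ε / 3) (by positivity)
  refine ⟨N, fun n hn => ?_⟩
  have hclose : ∀ m, dist (F m x) (F m y) ≤ C * (ε / (3 * (C + 1))) := fun m => by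
    rw [dist_eq_norm, ← map_sub]
    exact (F m).le_of_opNorm_le (hF m) _ |>.trans
      (mul_le_mul_of_nonneg_left hxy.le ((norm_nonneg _).trans (hF m)))
  have hsmall : C * (ε / (3 * (C + 1))) < ε / 3 := by
    rw [mul_div_assoc', div_lt_div_iff₀ (by positivity) (by norm_num)]
    nlinarith
  calc dist (F n x) (F N x)
      ≤ dist (F n x) (F n y) + dist (F n y) (F N y) + dist (F N y) (F N x) := dist_triangle4 ..
    _ < ε / 3 + ε / 3 + ε / 3 := by
      gcongr
      · exact (hclose n).trans_lt hsmall
      · exact hN n hn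
      · exact dist_comm (F N y) _ ▸ (hclose N).trans_lt hsmall
    _ = ε := by ring

lemma continuous_apply_of_dense {F : ℝ → B →L[ℝ] B} {s : Set B} (hs : Dense s)
    (hF : ∀ T, ∃ C, ∀ t ∈ Icc (-T) T, ‖F t‖ ≤ C)
    (hFs : ∀ x ∈ s, Continuous fun t => F t x) (x : B) :
    Continuous fun t => F t x := by
  refine continuous_iff_continuousAt.2 fun t₀ =>
    continuousAt_of_locally_uniform_approx_of_continuousAt fun U hU => ?_
  obtain ⟨ε, hε, hεU⟩ := Metric.mem_uniformity_dist.1 hU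
  obtain ⟨C, hC⟩ := hF (|t₀| + 1)
  have hC' : 0 < C + 1 := by
    have := hC t₀ ⟨by linarith [neg_abs_le t₀], by linarith [le_abs_self t₀]⟩
    linarith [norm_nonneg (F t₀)]
  obtain ⟨y, hxy, hy⟩ := Metric.dense_iff.1 hs x (ε / (C + 1)) (by positivity)
  rw [Metric.mem_ball, dist_comm, dist_eq_norm] at hxy
  refine ⟨Icc (-(|t₀| + 1)) (|t₀| + 1), Icc_mem_nhds (by linarith [neg_abs_le t₀])
    (by linarith [le_abs_self t₀]), fun t => F t y, (hFs y hy).continuousAt, fun t ht => hεU ?_⟩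
  rw [dist_eq_norm, ← map_sub]
  calc ‖F t (x - y)‖ ≤ C * ‖x - y‖ := (F t).le_of_opNorm_le (hC t ht) _
    _ ≤ C * (ε / (C + 1)) :=
      mul_le_mul_of_nonneg_left hxy.le ((norm_nonneg _).trans (hC t ht))
    _ < ε := by
      rw [mul_div_assoc', div_lt_iff₀ hC']
      nlinarith [norm_nonneg (F t), hC t ht]

end Dense

section Exp

lemma exp_smul_one {𝔸 : Type*} [NormedRing 𝔸] [NormedAlgebra ℝ 𝔸] [CompleteSpace 𝔸] (c : ℝ) :
    NormedSpace.exp (c • (1 : 𝔸)) = Real.exp c • 1 := by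
  rw [← Algebra.algebraMap_eq_smul_one, ← NormedSpace.algebraMap_exp_comm, ← Real.exp_eq_exp_ℝ,
    Algebra.algebraMap_eq_smul_one]

lemma norm_exp_le_exp_norm (x : B →L[ℝ] B) : ‖NormedSpace.exp x‖ ≤ Real.exp ‖x‖ := by
  have hpow : ∀ n : ℕ, ‖x ^ n‖ ≤ ‖x‖ ^ n
    | 0 => by rw [pow_zero, pow_zero]; exact ContinuousLinearMap.norm_id_le
    | n + 1 => norm_pow_le' x n.succ_pos
  rw [NormedSpace.exp_eq_tsum ℝ, Real.exp_eq_exp_ℝ, NormedSpace.exp_eq_tsum ℝ]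
  refine (norm_tsum_le_tsum_norm (NormedSpace.norm_expSeries_summable' x)).trans ?_
  refine (NormedSpace.norm_expSeries_summable' x).tsum_le_tsum (fun n => ?_)
    (NormedSpace.expSeries_summable' ‖x‖)
  rw [norm_smul, smul_eq_mul, Real.norm_of_nonneg (by positivity)]
  gcongr
  exact hpow n

variable [CompleteSpace B]

/-- `NormedSpace.exp_add_of_commute` is stated for normed `ℚ`-algebras. -/
lemma exp_add_of_commute_ℝ {𝔸 : Type*} [NormedRing 𝔸] [NormedAlgebra ℝ 𝔸] [CompleteSpace 𝔸]
    {x y : 𝔸} (hxy : Commute x y) :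
    NormedSpace.exp (x + y) = NormedSpace.exp x * NormedSpace.exp y := by
  let : NormedAlgebra ℚ 𝔸 := .restrictScalars ℚ ℝ 𝔸
  exact NormedSpace.exp_add_of_commute hxy

lemma hasDerivAt_exp_smul_apply (X : B →L[ℝ] B) (v : B) (t : ℝ) :
    HasDerivAt (fun s : ℝ => NormedSpace.exp (s • X) v) (NormedSpace.exp (t • X) (X v)) t := by
  simpa using (hasDerivAt_exp_smul_const X t).clm_apply (hasDerivAt_const t v)

lemma continuous_exp_smul_apply (X : B →L[ℝ] B) (v : B) :
    Continuous fun s : ℝ => NormedSpace.exp (s • X) v :=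
  continuous_iff_continuousAt.2 fun t => (hasDerivAt_exp_smul_apply X v t).continuousAt

lemma exp_smul_apply_eq_add_integral (X : B →L[ℝ] B) (v : B) (t : ℝ) :
    NormedSpace.exp (t • X) v = v + ∫ s in (0 : ℝ)..t, NormedSpace.exp (s • X) (X v) := by
  rw [intervalIntegral.integral_eq_sub_of_hasDerivAt (fun s _ => hasDerivAt_exp_smul_apply X v s)
    ((continuous_exp_smul_apply X (X v)).intervalIntegrable 0 t)]
  simp

/-- Duhamel comparison of two commuting exponentials, from the derivative of
`s ↦ exp ((t - s) • Y) (exp (s • X) v)`. -/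
lemma norm_exp_smul_apply_sub_le {X Y : B →L[ℝ] B} (hXY : Commute X Y) {c : ℝ}
    (hX : ∀ s, 0 ≤ s → ‖NormedSpace.exp (s • X)‖ ≤ Real.exp (c * s))
    (hY : ∀ s, 0 ≤ s → ‖NormedSpace.exp (s • Y)‖ ≤ Real.exp (c * s)) {t : ℝ} (ht : 0 ≤ t)
    (v : B) :
    ‖NormedSpace.exp (t • X) v - NormedSpace.exp (t • Y) v‖ ≤
      Real.exp (c * t) * t * ‖X v - Y v‖ := by
  have hderiv : ∀ s, HasDerivAt
      (fun s => NormedSpace.exp ((t - s) • Y) (NormedSpace.exp (s • X) v))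
      (NormedSpace.exp ((t - s) • Y) (NormedSpace.exp (s • X) (X v - Y v))) s := by
    intro s
    have hEY : HasDerivAt (fun s => NormedSpace.exp ((t - s) • Y))
        ((-1 : ℝ) • (NormedSpace.exp ((t - s) • Y) * Y)) s :=
      (hasDerivAt_exp_smul_const Y (t - s)).scomp s ((hasDerivAt_id s).const_sub t)
    have hcomm : Y (NormedSpace.exp (s • X) v) = NormedSpace.exp (s • X) (Y v) :=
      congr($(((hXY.symm.smul_right s).exp_right).eq) v)
    refine ((hEY.mul (hasDerivAt_exp_smul_const X s)).clm_apply
      (hasDerivAt_const s v)).congr_deriv ?_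
    simp only [Pi.mul_apply, neg_one_smul, map_zero, add_zero, neg_mul, add_apply, neg_apply,
      mul_apply_eq_comp, map_sub, hcomm]
    abel
  have hbound : ∀ s ∈ Icc 0 t,
      ‖NormedSpace.exp ((t - s) • Y) (NormedSpace.exp (s • X) (X v - Y v))‖ ≤
        Real.exp (c * t) * ‖X v - Y v‖ := fun s hs =>
    calc _ ≤ Real.exp (c * (t - s)) * (Real.exp (c * s) * ‖X v - Y v‖) :=
          (ContinuousLinearMap.le_of_opNorm_le _ (hY _ (sub_nonneg.2 hs.2)) _).trans <|
            mul_le_mul_of_nonneg_left (ContinuousLinearMap.le_of_opNorm_le _ (hX s hs.1) _)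
              (exp_nonneg _)
      _ = Real.exp (c * t) * ‖X v - Y v‖ := by rw [← mul_assoc, ← Real.exp_add]; ring_nf
  have := (convex_Icc 0 t).norm_image_sub_le_of_norm_hasDerivWithin_le
    (fun s _ => (hderiv s).hasDerivWithinAt) hbound (left_mem_Icc.2 ht) (right_mem_Icc.2 ht)
  simpa [Real.norm_of_nonneg ht, mul_right_comm] using this

end Exp

structure IsHilleYosida (p : Submodule ℝ B) (A : p →ₗ[ℝ] B) (γ : ℝ) : Prop where
  nonneg : 0 ≤ γ
  dense : Dense (p : Set B)
  bijective : ∀ lam, γ < lam → Function.Bijective (fun u : p => lam • (u : B) - A u)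
  le_norm : ∀ lam, γ < lam → ∀ u : p, (lam - γ) * ‖(u : B)‖ ≤ ‖lam • (u : B) - A u‖

namespace IsHilleYosida

variable {p : Submodule ℝ B} {A : p →ₗ[ℝ] B} {γ : ℝ} (h : IsHilleYosida p A γ)
  {lam μ : ℝ} (hl : γ < lam) (hμ : γ < μ)

def resolventₗ : B →ₗ[ℝ] p :=
  (LinearEquiv.ofBijective (lam • p.subtype - A) (h.bijective lam hl)).symm.toLinearMap

lemma smul_resolventₗ_sub (ψ : B) :
    lam • (h.resolventₗ hl ψ : B) - A (h.resolventₗ hl ψ) = ψ :=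
  (LinearEquiv.ofBijective (lam • p.subtype - A) (h.bijective lam hl)).apply_symm_apply ψ

lemma resolventₗ_smul_sub (u : p) : h.resolventₗ hl (lam • (u : B) - A u) = u :=
  (LinearEquiv.ofBijective (lam • p.subtype - A) (h.bijective lam hl)).symm_apply_apply u

def resolvent : B →L[ℝ] B :=
  (p.subtype ∘ₗ h.resolventₗ hl).mkContinuous (lam - γ)⁻¹ fun ψ => by
    have hb := h.le_norm lam hl (h.resolventₗ hl ψ)
    rw [smul_resolventₗ_sub] at hb
    rw [inv_mul_eq_div, le_div_iff₀ (sub_pos.2 hl)]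
    simpa [mul_comm] using hb

lemma resolvent_apply (ψ : B) : h.resolvent hl ψ = h.resolventₗ hl ψ := rfl

lemma resolvent_mem (ψ : B) : h.resolvent hl ψ ∈ p := (h.resolventₗ hl ψ).2

lemma norm_resolvent_le : ‖h.resolvent hl‖ ≤ (lam - γ)⁻¹ :=
  LinearMap.mkContinuous_norm_le _ (inv_nonneg.2 (sub_pos.2 hl).le) _

lemma map_resolventₗ (ψ : B) : A (h.resolventₗ hl ψ) = lam • h.resolvent hl ψ - ψ := by
  rw [resolvent_apply]
  linear_combination (norm := module) -h.smul_resolventₗ_sub hl ψ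

lemma resolvent_map (u : p) : h.resolvent hl (A u) = lam • h.resolvent hl u - u := by
  have := congr_arg Subtype.val (h.resolventₗ_smul_sub hl u)
  rw [map_sub, map_smul, Submodule.coe_sub, Submodule.coe_smul] at this
  rw [resolvent_apply, resolvent_apply]
  linear_combination (norm := module) -this

lemma resolvent_sub_resolvent (ψ : B) :
    h.resolvent hl ψ - h.resolvent hμ ψ = (μ - lam) • h.resolvent hμ (h.resolvent hl ψ) := by
  have key : h.resolventₗ hl ψ - h.resolventₗ hμ ψ =
      (μ - lam) • h.resolventₗ hμ (h.resolvent hl ψ) := by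
    apply (h.bijective μ hμ).1
    simp only [map_sub, map_smul, Submodule.coe_sub, Submodule.coe_smul, map_resolventₗ,
      resolvent_apply]
    module
  exact congr_arg Subtype.val key

lemma commute_resolvent : Commute (h.resolvent hl) (h.resolvent hμ) := by
  ext ψ
  rcases eq_or_ne lam μ with rfl | hne
  · rfl
  have h₁ := h.resolvent_sub_resolvent hl hμ ψ
  have h₂ := h.resolvent_sub_resolvent hμ hl ψ
  have : (μ - lam) • (h.resolvent hl (h.resolvent hμ ψ) - h.resolvent hμ (h.resolvent hl ψ)) =
      0 := by
    rw [smul_sub, ← h₁, show μ - lam = -(lam - μ) by ring, neg_smul, ← h₂]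
    abel
  exact sub_eq_zero.1 ((smul_eq_zero.1 this).resolve_left (sub_ne_zero.2 hne.symm))

end IsHilleYosida

def yosidaParam (γ : ℝ) (n : ℕ) : ℝ := γ + n + 1

lemma lt_yosidaParam (γ : ℝ) (n : ℕ) : γ < yosidaParam γ n := by
  unfold yosidaParam; linarith [n.cast_nonneg (α := ℝ)]

lemma yosidaParam_sub_self (γ : ℝ) (n : ℕ) : yosidaParam γ n - γ = n + 1 := by
  unfold yosidaParam; ring

lemma tendsto_inv_nat_add_one : Tendsto (fun n : ℕ => ((n : ℝ) + 1)⁻¹) atTop (𝓝 0) := by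
  simpa [one_div] using tendsto_one_div_add_atTop_nhds_zero_nat (𝕜 := ℝ)

namespace IsHilleYosida

variable {p : Submodule ℝ B} {A : p →ₗ[ℝ] B} {γ : ℝ} (h : IsHilleYosida p A γ)

def resolventSeq (n : ℕ) : B →L[ℝ] B := h.resolvent (lt_yosidaParam γ n)

lemma norm_resolventSeq_le (n : ℕ) : ‖h.resolventSeq n‖ ≤ ((n : ℝ) + 1)⁻¹ :=
  yosidaParam_sub_self γ n ▸ h.norm_resolvent_le _

lemma norm_smul_resolventSeq_le (n : ℕ) : ‖yosidaParam γ n • h.resolventSeq n‖ ≤ 1 + γ := by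
  have hn : (0 : ℝ) < n + 1 := by positivity
  rw [norm_smul, Real.norm_of_nonneg (h.nonneg.trans (lt_yosidaParam γ n).le)]
  calc yosidaParam γ n * ‖h.resolventSeq n‖ ≤ yosidaParam γ n * ((n : ℝ) + 1)⁻¹ := by
        gcongr
        · exact h.nonneg.trans (lt_yosidaParam γ n).le
        · exact h.norm_resolventSeq_le n
    _ ≤ 1 + γ := by
        rw [mul_inv_le_iff₀ hn, yosidaParam]
        nlinarith [h.nonneg, n.cast_nonneg (α := ℝ)]

lemma tendsto_smul_resolventSeq (ψ : B) :
    Tendsto (fun n => yosidaParam γ n • h.resolventSeq n ψ) atTop (𝓝 ψ) := by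
  refine tendsto_apply_of_dense (G := ContinuousLinearMap.id ℝ B) h.dense
    h.norm_smul_resolventSeq_le (fun φ hφ => ?_) ψ
  -- on the domain, `λ R(λ) φ - φ = R(λ) (A φ)` is of size `O(1 / λ)`
  rw [tendsto_iff_norm_sub_tendsto_zero]
  refine squeeze_zero (fun n => norm_nonneg _) (fun n => ?_)
    (by simpa using tendsto_inv_nat_add_one.mul_const ‖A ⟨φ, hφ⟩‖)
  calc ‖(yosidaParam γ n • h.resolventSeq n) φ - φ‖ = ‖h.resolventSeq n (A ⟨φ, hφ⟩)‖ := by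
        simp [resolventSeq, h.resolvent_map]
    _ ≤ ((n : ℝ) + 1)⁻¹ * ‖A ⟨φ, hφ⟩‖ :=
        (h.resolventSeq n).le_of_opNorm_le (h.norm_resolventSeq_le n) _

lemma resolventSeq_smul_sub (n : ℕ) (u : p) :
    h.resolventSeq n (yosidaParam γ n • (u : B) - A u) = u :=
  congr_arg Subtype.val (h.resolventₗ_smul_sub _ u)

def yosida (n : ℕ) : B →L[ℝ] B := yosidaParam γ n ^ 2 • h.resolventSeq n - yosidaParam γ n • 1

lemma yosida_apply_of_mem (n : ℕ) (φ : p) :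
    h.yosida n φ = yosidaParam γ n • h.resolventSeq n (A φ) := by
  simp only [yosida, resolventSeq, h.resolvent_map, sub_apply, smul_apply, one_apply_eq_self]
  module

lemma tendsto_yosida (φ : p) : Tendsto (fun n => h.yosida n φ) atTop (𝓝 (A φ)) := by
  simpa only [h.yosida_apply_of_mem] using h.tendsto_smul_resolventSeq (A φ)

lemma commute_yosida_resolventSeq (n m : ℕ) : Commute (h.yosida n) (h.resolventSeq m) :=
  ((h.commute_resolvent _ _).smul_left _).sub_left ((Commute.one_left _).smul_left _)

lemma commute_yosida (n m : ℕ) : Commute (h.yosida n) (h.yosida m) :=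
  ((h.commute_yosida_resolventSeq n m).smul_right _).sub_right ((Commute.one_right _).smul_right _)

section Semigroup

variable [CompleteSpace B]

lemma norm_exp_smul_yosida_le (n : ℕ) {t : ℝ} (ht : 0 ≤ t) :
    ‖NormedSpace.exp (t • h.yosida n)‖ ≤ Real.exp ((γ + γ ^ 2 / (n + 1)) * t) := by
  set lam := yosidaParam γ n
  have hcomm : Commute ((t * lam ^ 2) • h.resolventSeq n) ((-(t * lam)) • (1 : B →L[ℝ] B)) :=
    ((Commute.one_right _).smul_left _).smul_right _
  rw [show t • h.yosida n = (t * lam ^ 2) • h.resolventSeq n + (-(t * lam)) • (1 : B →L[ℝ] B) by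
      rw [yosida, smul_sub, smul_smul, smul_smul, sub_eq_add_neg, neg_smul],
    exp_add_of_commute_ℝ hcomm, exp_smul_one]
  calc _ ≤ Real.exp (t * lam ^ 2 * ((n : ℝ) + 1)⁻¹) * Real.exp (-(t * lam)) := by
        refine (norm_mul_le _ _).trans (mul_le_mul ?_ ?_ (norm_nonneg _) (exp_nonneg _))
        · refine (norm_exp_le_exp_norm _).trans (Real.exp_le_exp.2 ?_)
          rw [norm_smul, Real.norm_of_nonneg (by positivity)]
          exact mul_le_mul_of_nonneg_left (h.norm_resolventSeq_le n) (by positivity)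
        · rw [norm_smul, Real.norm_of_nonneg (exp_nonneg _)]
          exact mul_le_of_le_one_right (exp_nonneg _) ContinuousLinearMap.norm_id_le
    _ = Real.exp ((γ + γ ^ 2 / (n + 1)) * t) := by
        rw [← Real.exp_add]
        congr 1
        simp only [lam, yosidaParam]
        field_simp
        ring

lemma norm_exp_smul_yosida_le_uniform (n : ℕ) {t : ℝ} (ht : 0 ≤ t) :
    ‖NormedSpace.exp (t • h.yosida n)‖ ≤ Real.exp ((γ + γ ^ 2) * t) := by
  refine (h.norm_exp_smul_yosida_le n ht).trans (Real.exp_le_exp.2 ?_)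
  gcongr
  exact div_le_self (sq_nonneg γ) (by linarith [n.cast_nonneg (α := ℝ)])

lemma norm_exp_smul_yosida_apply_sub_le (n m : ℕ) {t : ℝ} (ht : 0 ≤ t) (v : B) :
    ‖NormedSpace.exp (t • h.yosida n) v - NormedSpace.exp (t • h.yosida m) v‖ ≤
      Real.exp ((γ + γ ^ 2) * t) * t * ‖h.yosida n v - h.yosida m v‖ :=
  norm_exp_smul_apply_sub_le (h.commute_yosida n m) (fun _ => h.norm_exp_smul_yosida_le_uniform n)
    (fun _ => h.norm_exp_smul_yosida_le_uniform m) ht v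

lemma cauchySeq_exp_smul_yosida {t : ℝ} (ht : 0 ≤ t) (ψ : B) :
    CauchySeq fun n => NormedSpace.exp (t • h.yosida n) ψ := by
  refine cauchySeq_apply_of_dense h.dense (fun n => h.norm_exp_smul_yosida_le_uniform n ht)
    (fun φ hφ => ?_) ψ
  set K := Real.exp ((γ + γ ^ 2) * t) * t + 1
  have hK : 0 < K := by positivity
  rw [Metric.cauchySeq_iff]
  intro ε hε
  obtain ⟨N, hN⟩ :=
    Metric.cauchySeq_iff.1 (h.tendsto_yosida ⟨φ, hφ⟩).cauchySeq (ε / K) (by positivity)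
  refine ⟨N, fun n hn m hm => ?_⟩
  rw [dist_eq_norm]
  calc _ ≤ Real.exp ((γ + γ ^ 2) * t) * t * ‖h.yosida n φ - h.yosida m φ‖ :=
        h.norm_exp_smul_yosida_apply_sub_le n m ht φ
    _ ≤ K * ‖h.yosida n φ - h.yosida m φ‖ := by gcongr; linarith
    _ < K * (ε / K) := by gcongr; rw [← dist_eq_norm]; exact hN n hn m hm
    _ = ε := by field_simp

/-- The strong limit of `exp (t • yosida n)`; clamping `t` at `0` makes it `1` for `t ≤ 0`, so
that `t ↦ semigroup t` is continuous on all of `ℝ`. -/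
def semigroup (t : ℝ) : B →L[ℝ] B :=
  continuousLinearMapOfTendsto (fun n => NormedSpace.exp (max t 0 • h.yosida n))
    (tendsto_pi_nhds.2 fun ψ => (h.cauchySeq_exp_smul_yosida (le_max_right t 0) ψ).tendsto_limUnder)

lemma semigroup_max_zero (t : ℝ) : h.semigroup (max t 0) = h.semigroup t := by
  simp only [semigroup, max_assoc, max_self]

lemma tendsto_semigroup {t : ℝ} (ht : 0 ≤ t) (ψ : B) :
    Tendsto (fun n => NormedSpace.exp (t • h.yosida n) ψ) atTop (𝓝 (h.semigroup t ψ)) := by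
  have : Tendsto (fun n => NormedSpace.exp (max t 0 • h.yosida n) ψ) atTop
      (𝓝 (h.semigroup t ψ)) :=
    (h.cauchySeq_exp_smul_yosida (le_max_right t 0) ψ).tendsto_limUnder
  rwa [max_eq_left ht] at this

lemma tendsto_semigroup_of_tendsto {t : ℝ} (ht : 0 ≤ t) {χ : ℕ → B} {χ₀ : B}
    (hχ : Tendsto χ atTop (𝓝 χ₀)) :
    Tendsto (fun n => NormedSpace.exp (t • h.yosida n) (χ n)) atTop (𝓝 (h.semigroup t χ₀)) := by
  have hdiff : Tendsto (fun n => NormedSpace.exp (t • h.yosida n) (χ n - χ₀)) atTop (𝓝 0) :=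
    squeeze_zero_norm
      (fun n => ContinuousLinearMap.le_of_opNorm_le _ (h.norm_exp_smul_yosida_le_uniform n ht) _)
      (by simpa using
        (tendsto_iff_norm_sub_tendsto_zero.1 hχ).const_mul (Real.exp ((γ + γ ^ 2) * t)))
  simpa using hdiff.add (h.tendsto_semigroup ht χ₀)

lemma norm_semigroup_le (t : ℝ) : ‖h.semigroup t‖ ≤ Real.exp (γ * max t 0) := by
  have hrate : Tendsto (fun n : ℕ => γ + γ ^ 2 / ((n : ℝ) + 1)) atTop (𝓝 γ) := by
    simpa [div_eq_mul_inv] using (tendsto_inv_nat_add_one.const_mul (γ ^ 2)).const_add γ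
  rw [← h.semigroup_max_zero]
  refine ContinuousLinearMap.opNorm_le_bound _ (exp_nonneg _) fun ψ =>
    le_of_tendsto_of_tendsto' (h.tendsto_semigroup (le_max_right t 0) ψ).norm
      ((hrate.mul_const (max t 0)).rexp.mul_const ‖ψ‖) fun n =>
        ContinuousLinearMap.le_of_opNorm_le _ (h.norm_exp_smul_yosida_le n (le_max_right t 0)) ψ

lemma semigroup_zero : h.semigroup 0 = 1 := by
  ext ψ
  exact tendsto_nhds_unique (h.tendsto_semigroup le_rfl ψ) (by simp)

lemma semigroup_add {s t : ℝ} (hs : 0 ≤ s) (ht : 0 ≤ t) :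
    h.semigroup (s + t) = h.semigroup s * h.semigroup t := by
  ext ψ
  refine tendsto_nhds_unique (h.tendsto_semigroup (add_nonneg hs ht) ψ) ?_
  simpa [add_smul, exp_add_of_commute_ℝ (((Commute.refl (h.yosida _)).smul_left s).smul_right t)]
    using h.tendsto_semigroup_of_tendsto hs (h.tendsto_semigroup ht ψ)

lemma semigroup_apply_resolventSeq {t : ℝ} (ht : 0 ≤ t) (m : ℕ) (ψ : B) :
    h.semigroup t (h.resolventSeq m ψ) = h.resolventSeq m (h.semigroup t ψ) := by
  refine tendsto_nhds_unique (h.tendsto_semigroup ht _) ?_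
  have hcomm : ∀ n, NormedSpace.exp (t • h.yosida n) (h.resolventSeq m ψ) =
      h.resolventSeq m (NormedSpace.exp (t • h.yosida n) ψ) := fun n =>
    congr($(((h.commute_yosida_resolventSeq n m).smul_left t).exp_left.eq) ψ)
  simp only [hcomm]
  exact ((h.resolventSeq m).continuous.tendsto _).comp (h.tendsto_semigroup ht ψ)

lemma semigroup_mem {t : ℝ} (ht : 0 ≤ t) (φ : p) : h.semigroup t φ ∈ p := by
  rw [← h.resolventSeq_smul_sub 0 φ, h.semigroup_apply_resolventSeq ht]
  exact h.resolvent_mem _ _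

lemma map_semigroup {t : ℝ} (ht : 0 ≤ t) (φ : p) :
    A ⟨h.semigroup t φ, h.semigroup_mem ht φ⟩ = h.semigroup t (A φ) := by
  set χ := h.semigroup t (yosidaParam γ 0 • (φ : B) - A φ)
  have key : h.semigroup t φ = h.resolventSeq 0 χ := by
    conv_lhs => rw [← h.resolventSeq_smul_sub 0 φ, h.semigroup_apply_resolventSeq ht]
  rw [show (⟨h.semigroup t φ, h.semigroup_mem ht φ⟩ : p) = h.resolventₗ (lt_yosidaParam γ 0) χ from
    Subtype.ext key, map_resolventₗ, show h.resolvent (lt_yosidaParam γ 0) χ = h.semigroup t φ from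
    key.symm]
  simp only [χ, map_sub, map_smul]
  abel

lemma norm_exp_smul_yosida_apply_sub_semigroup_le (n : ℕ) {t : ℝ} (ht : 0 ≤ t) (φ : p) :
    ‖NormedSpace.exp (t • h.yosida n) φ - h.semigroup t φ‖ ≤
      Real.exp ((γ + γ ^ 2) * t) * t * ‖h.yosida n φ - A φ‖ :=
  le_of_tendsto_of_tendsto' ((tendsto_const_nhds.sub (h.tendsto_semigroup ht φ)).norm)
    (((tendsto_const_nhds.sub (h.tendsto_yosida φ)).norm).const_mul _)
    fun m => h.norm_exp_smul_yosida_apply_sub_le n m ht φ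

lemma continuous_semigroup_apply_of_mem (φ : p) : Continuous fun t => h.semigroup t φ := by
  refine TendstoLocallyUniformly.continuous (p := atTop)
    (F := fun n t => NormedSpace.exp (max t 0 • h.yosida n) φ) ?_ (Eventually.of_forall fun n =>
      (continuous_exp_smul_apply _ _).comp (continuous_id.max continuous_const)).frequently
  rw [Metric.tendstoLocallyUniformly_iff]
  intro ε hε x
  set T := |x| + 1
  refine ⟨Iio T, Iio_mem_nhds ((le_abs_self x).trans_lt (lt_add_one _)), ?_⟩
  have hlim : Tendsto (fun n => Real.exp ((γ + γ ^ 2) * T) * T * ‖h.yosida n φ - A φ‖) atTop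
      (𝓝 0) := by
    simpa using (tendsto_iff_norm_sub_tendsto_zero.1 (h.tendsto_yosida φ)).const_mul
      (Real.exp ((γ + γ ^ 2) * T) * T)
  filter_upwards [hlim.eventually_lt_const hε] with n hn y hy
  have hyT : max y 0 ≤ T := max_le hy.le (by positivity)
  rw [← h.semigroup_max_zero y, dist_comm, dist_eq_norm]
  calc _ ≤ Real.exp ((γ + γ ^ 2) * max y 0) * max y 0 * ‖h.yosida n φ - A φ‖ :=
        h.norm_exp_smul_yosida_apply_sub_semigroup_le n (le_max_right y 0) φ
    _ ≤ Real.exp ((γ + γ ^ 2) * T) * T * ‖h.yosida n φ - A φ‖ := by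
        have := h.nonneg
        gcongr
    _ < ε := hn

lemma continuous_semigroup_apply (ψ : B) : Continuous fun t => h.semigroup t ψ :=
  continuous_apply_of_dense h.dense
    (fun T => ⟨Real.exp (γ * max T 0), fun t ht => (h.norm_semigroup_le t).trans
      (exp_le_exp.2 (mul_le_mul_of_nonneg_left (max_le_max ht.2 le_rfl) h.nonneg))⟩)
    (fun φ hφ => h.continuous_semigroup_apply_of_mem ⟨φ, hφ⟩) ψ

lemma semigroup_apply_eq_add_integral {t : ℝ} (ht : 0 ≤ t) (φ : p) :
    h.semigroup t φ = φ + ∫ s in (0 : ℝ)..t, h.semigroup s (A φ) := by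
  obtain ⟨M, hM⟩ := (h.tendsto_yosida φ).norm.bddAbove_range
  have hlim : Tendsto (fun n => ∫ s in (0 : ℝ)..t, NormedSpace.exp (s • h.yosida n) (h.yosida n φ))
      atTop (𝓝 (∫ s in (0 : ℝ)..t, h.semigroup s (A φ))) := by
    refine intervalIntegral.tendsto_integral_filter_of_dominated_convergence
      (fun _ => Real.exp ((γ + γ ^ 2) * t) * M)
      (Eventually.of_forall fun n => (continuous_exp_smul_apply _ _).aestronglyMeasurable)
      (Eventually.of_forall fun n => Eventually.of_forall fun s hs => ?_)
      intervalIntegrable_const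
      (Eventually.of_forall fun s hs => h.tendsto_semigroup_of_tendsto ?_ (h.tendsto_yosida φ))
    · rw [uIoc_of_le ht] at hs
      have := h.nonneg
      refine ContinuousLinearMap.le_of_opNorm_le _
        (h.norm_exp_smul_yosida_le_uniform n hs.1.le) _ |>.trans ?_
      gcongr
      · exact hs.2
      · exact hM (mem_range_self n)
    · exact (uIoc_of_le ht ▸ hs).1.le
  have hFTC := h.tendsto_semigroup ht φ
  simp_rw [exp_smul_apply_eq_add_integral _ _ t] at hFTC
  exact tendsto_nhds_unique hFTC (tendsto_const_nhds.add hlim)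

lemma hasDerivWithinAt_semigroup {t : ℝ} (ht : 0 ≤ t) (φ : p) :
    HasDerivWithinAt (fun s => h.semigroup s φ) (h.semigroup t (A φ)) (Ici 0) t := by
  have hcont := h.continuous_semigroup_apply (A φ)
  exact ((intervalIntegral.integral_hasDerivAt_right (hcont.intervalIntegrable 0 t)
    hcont.stronglyMeasurable.stronglyMeasurableAtFilter hcont.continuousAt).const_add
      (φ : B)).hasDerivWithinAt.congr (fun y hy => h.semigroup_apply_eq_add_integral hy φ)
      (h.semigroup_apply_eq_add_integral ht φ)

/-- Joint continuity of `(t, v) ↦ S t v`, from strong continuity and local boundedness. -/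
lemma tendsto_semigroup_apply {l : Filter ℝ} {x : ℝ} (hl : l ≤ 𝓝 x) {u : ℝ → B} {v : B}
    (hu : Tendsto u l (𝓝 v)) : Tendsto (fun y => h.semigroup y (u y)) l (𝓝 (h.semigroup x v)) := by
  set K := Real.exp (γ * (|x| + 1))
  have hbound : ∀ᶠ y in l, ‖h.semigroup y (u y - v)‖ ≤ K * ‖u y - v‖ := by
    filter_upwards [hl ((continuous_abs.tendsto x).eventually_lt_const (lt_add_one |x|))] with y hy
    refine ContinuousLinearMap.le_of_opNorm_le _ ((h.norm_semigroup_le y).trans ?_) _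
    exact exp_le_exp.2 (mul_le_mul_of_nonneg_left
      (max_le ((le_abs_self y).trans hy.le) (by positivity)) h.nonneg)
  have hsmall : Tendsto (fun y => h.semigroup y (u y - v)) l (𝓝 0) :=
    squeeze_zero_norm' hbound
      (by simpa using (tendsto_iff_norm_sub_tendsto_zero.1 hu).const_mul K)
  simpa using hsmall.add (((h.continuous_semigroup_apply v).tendsto x).mono_left hl)

lemma hasDerivWithinAt_semigroup_apply {x : ℝ} (hx : 0 ≤ x) {g : ℝ → B} {g' : B}
    (hg : HasDerivWithinAt g g' (Ici 0) x) (hmem : g x ∈ p) :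
    HasDerivWithinAt (fun y => h.semigroup y (g y))
      (h.semigroup x (A ⟨g x, hmem⟩) + h.semigroup x g') (Ici 0) x := by
  rw [hasDerivWithinAt_iff_tendsto_slope] at hg ⊢
  have hS := hasDerivWithinAt_iff_tendsto_slope.1 (h.hasDerivWithinAt_semigroup hx ⟨g x, hmem⟩)
  refine (hS.add (h.tendsto_semigroup_apply nhdsWithin_le_nhds hg)).congr fun y => ?_
  simp only [slope, vsub_eq_sub, map_smul, map_sub, smul_sub]
  abel

lemma semigroup_mul_semigroup_of_neg {A' : p →ₗ[ℝ] B} (h' : IsHilleYosida p A' γ) (hA : A' = -A)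
    {r : ℝ} (hr : 0 ≤ r) : h.semigroup r * h'.semigroup r = 1 := by
  subst hA
  -- `y ↦ S y (S' y φ)` has derivative `S y (A (S' y φ)) + S y (S' y (-A φ)) = 0`
  have hderiv : ∀ φ : p, ∀ x, 0 ≤ x →
      HasDerivWithinAt (fun y => h.semigroup y (h'.semigroup y φ)) 0 (Ici 0) x := fun φ x hx => by
    have := h.hasDerivWithinAt_semigroup_apply hx (h'.hasDerivWithinAt_semigroup hx φ)
      (h'.semigroup_mem hx φ)
    rwa [show A ⟨h'.semigroup x φ, _⟩ = -h'.semigroup x ((-A) φ) by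
      rw [← h'.map_semigroup hx φ, LinearMap.neg_apply, neg_neg], map_neg, neg_add_cancel] at this
  have hcont : ∀ φ : p, Continuous fun y => h.semigroup y (h'.semigroup y φ) := fun φ =>
    continuous_iff_continuousAt.2 fun x =>
      h.tendsto_semigroup_apply le_rfl ((h'.continuous_semigroup_apply φ).tendsto x)
  refine ContinuousLinearMap.ext_on (s := p) (by rw [Submodule.span_eq]; exact h.dense) ?_
  intro φ hφ
  have := constant_of_has_deriv_right_zero (hcont ⟨φ, hφ⟩).continuousOn
    (fun x hx => (hderiv ⟨φ, hφ⟩ x hx.1).mono (Ici_subset_Ici.2 hx.1)) r ⟨hr, le_rfl⟩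
  simpa [semigroup_zero] using this

end Semigroup

end IsHilleYosida

lemma isHilleYosida_of_abs {p : Submodule ℝ B} {A : p →ₗ[ℝ] B} {γ : ℝ} (hγ : 0 ≤ γ)
    (hdense : Dense (p : Set B))
    (hres : ∀ lam : ℝ, γ < |lam| →
      Function.Bijective (fun u : p => lam • (u : B) - A u) ∧
      ∀ u : p, (|lam| - γ) * ‖(u : B)‖ ≤ ‖lam • (u : B) - A u‖) :
    IsHilleYosida p A γ where
  nonneg := hγ
  dense := hdense
  bijective lam hl := (hres lam (by rwa [abs_of_pos (hγ.trans_lt hl)])).1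
  le_norm lam hl u := by
    simpa [abs_of_pos (hγ.trans_lt hl)] using (hres lam (by rwa [abs_of_pos (hγ.trans_lt hl)])).2 u

lemma isHilleYosida_neg_of_abs {p : Submodule ℝ B} {A : p →ₗ[ℝ] B} {γ : ℝ} (hγ : 0 ≤ γ)
    (hdense : Dense (p : Set B))
    (hres : ∀ lam : ℝ, γ < |lam| →
      Function.Bijective (fun u : p => lam • (u : B) - A u) ∧
      ∀ u : p, (|lam| - γ) * ‖(u : B)‖ ≤ ‖lam • (u : B) - A u‖) :
    IsHilleYosida p (-A) γ := by
  refine isHilleYosida_of_abs hγ hdense fun lam hl => ?_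
  have hneg : (fun u : p => lam • (u : B) - (-A) u) = fun u : p => -((-lam) • (u : B) - A u) := by
    funext u
    simp only [LinearMap.neg_apply, neg_smul]
    abel
  obtain ⟨hbij, hle⟩ := hres (-lam) (by rwa [abs_neg])
  refine ⟨hneg ▸ neg_involutive.bijective.comp hbij, fun u => ?_⟩
  rw [show lam • (u : B) - (-A) u = _ from congr_fun hneg u, norm_neg]
  simpa only [abs_neg] using hle u

section Group

variable [CompleteSpace B] {p : Submodule ℝ B} {A : p →ₗ[ℝ] B} {γ : ℝ}
  (hA : IsHilleYosida p A γ) (hnA : IsHilleYosida p (-A) γ)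

def group : ℝ → B →L[ℝ] B := glue hA.semigroup hnA.semigroup

lemma group_of_nonneg {t : ℝ} (ht : 0 ≤ t) : group hA hnA t = hA.semigroup t := if_pos ht

lemma group_of_nonpos {t : ℝ} (ht : t ≤ 0) : group hA hnA t = hnA.semigroup (-t) := by
  rcases ht.lt_or_eq with ht | rfl
  · exact if_neg ht.not_ge
  · rw [group_of_nonneg _ _ le_rfl, neg_zero, hA.semigroup_zero, hnA.semigroup_zero]

lemma group_add (s t : ℝ) : group hA hnA (s + t) = group hA hnA s * group hA hnA t :=
  glue_add (fun _ _ => hA.semigroup_add) (fun _ _ => hnA.semigroup_add)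
    (fun _ => hA.semigroup_mul_semigroup_of_neg hnA rfl)
    (fun _ => hnA.semigroup_mul_semigroup_of_neg hA (neg_neg A).symm) s t

lemma continuous_group_apply (ψ : B) : Continuous fun t => group hA hnA t ψ := by
  simp only [group, glue, apply_ite (fun S : B →L[ℝ] B => S ψ)]
  refine Continuous.if_le (hA.continuous_semigroup_apply ψ)
    ((hnA.continuous_semigroup_apply ψ).comp continuous_neg) continuous_const continuous_id ?_
  rintro t rfl
  simp [hA.semigroup_zero, hnA.semigroup_zero]

lemma norm_group_apply_le (t : ℝ) (ψ : B) : ‖group hA hnA t ψ‖ ≤ Real.exp (γ * |t|) * ‖ψ‖ := by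
  refine ContinuousLinearMap.le_of_opNorm_le _ ?_ ψ
  rcases le_total 0 t with ht | ht
  · simpa [group_of_nonneg _ _ ht, abs_of_nonneg ht, ht] using hA.norm_semigroup_le t
  · simpa [group_of_nonpos _ _ ht, abs_of_nonpos ht, ht] using hnA.norm_semigroup_le (-t)

lemma group_mem (t : ℝ) (φ : p) : group hA hnA t φ ∈ p := by
  rcases le_total 0 t with ht | ht
  · exact group_of_nonneg hA hnA ht ▸ hA.semigroup_mem ht φ
  · exact group_of_nonpos hA hnA ht ▸ hnA.semigroup_mem (neg_nonneg.2 ht) φ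

lemma map_group (t : ℝ) (φ : p) :
    A ⟨group hA hnA t φ, group_mem hA hnA t φ⟩ = group hA hnA t (A φ) := by
  rcases le_total 0 t with ht | ht
  · simp only [group_of_nonneg hA hnA ht]
    exact hA.map_semigroup ht φ
  · simp only [group_of_nonpos hA hnA ht]
    simpa using hnA.map_semigroup (neg_nonneg.2 ht) φ

lemma hasDerivAt_group_apply_zero (φ : p) : HasDerivAt (fun s => group hA hnA s φ) (A φ) 0 := by
  have hright : HasDerivWithinAt (fun s => group hA hnA s φ) (A φ) (Ici 0) 0 := by
    have := hA.hasDerivWithinAt_semigroup le_rfl φ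
    rw [hA.semigroup_zero, one_apply_eq_self] at this
    exact this.congr (fun y hy => by rw [group_of_nonneg hA hnA hy])
      (by rw [group_of_nonneg hA hnA le_rfl])
  have hleft : HasDerivWithinAt (fun s => group hA hnA s φ) (A φ) (Iic 0) 0 := by
    have := hnA.hasDerivWithinAt_semigroup le_rfl φ
    rw [hnA.semigroup_zero, one_apply_eq_self, ← neg_zero] at this
    have := this.scomp 0 (hasDerivWithinAt_neg 0 (Iic 0)) fun y hy => by simpa using hy
    simp only [LinearMap.neg_apply, smul_neg, neg_one_smul, neg_neg] at this
    exact this.congr (fun y hy => by rw [group_of_nonpos hA hnA hy]; rfl)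
      (by rw [group_of_nonpos hA hnA le_rfl]; rfl)
  simpa using hleft.union hright

lemma hasDerivAt_group_apply (φ : p) (t : ℝ) :
    HasDerivAt (fun s => group hA hnA s φ) (group hA hnA t (A φ)) t := by
  have hshift : (fun s => group hA hnA s φ) = fun s => group hA hnA t (group hA hnA (s - t) φ) := by
    funext s
    rw [← mul_apply_eq_comp, ← group_add, add_sub_cancel]
  rw [hshift]
  exact (group hA hnA t).hasFDerivAt.comp_hasDerivAt t
    (HasDerivAt.comp_sub_const t t (by simpa using hasDerivAt_group_apply_zero hA hnA φ))

end Group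

end HilleYosida

theorem hille_yosida_group_general
    {B : Type*} [NormedAddCommGroup B] [NormedSpace ℝ B] [CompleteSpace B]
    (p : Submodule ℝ B) (A : p →ₗ[ℝ] B) (γ : ℝ) (hγ : 0 ≤ γ)
    (hdense : Dense (p : Set B))
    (hres : ∀ lam : ℝ, γ < |lam| →
      Function.Bijective (fun u : p => lam • (u : B) - A u) ∧
      ∀ u : p, (|lam| - γ) * ‖(u : B)‖ ≤ ‖lam • (u : B) - A u‖) :
    ∃ W : ℝ → B →L[ℝ] B,
      W 0 = ContinuousLinearMap.id ℝ B ∧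
      (∀ s t, W (s + t) = (W s).comp (W t)) ∧
      (∀ φ : B, Continuous fun t => W t φ) ∧
      (∀ (t : ℝ) (φ : B), ‖W t φ‖ ≤ Real.exp (γ * |t|) * ‖φ‖) ∧
      (∀ φ : p, ∀ t : ℝ, ∃ h : (W t (φ : B)) ∈ p,
        HasDerivAt (fun s => W s (φ : B)) (A ⟨W t (φ : B), h⟩) t) := by
  open HilleYosida in
  have hA := isHilleYosida_of_abs hγ hdense hres
  have hnA := isHilleYosida_neg_of_abs hγ hdense hres
  refine ⟨group hA hnA, (group_of_nonneg hA hnA le_rfl).trans hA.semigroup_zero,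
    group_add hA hnA, continuous_group_apply hA hnA, norm_group_apply_le hA hnA,
    fun φ t => ⟨group_mem hA hnA t φ, ?_⟩⟩
  rw [map_group]
  exact hasDerivAt_group_apply hA hnA φ t

/-- Hille–Yosida for groups: a closed densely defined operator `A` on a Banach space whose
real `λ` with `|λ| > γ` lie in the resolvent set with `‖(λ−A)⁻¹‖ ≤ (|λ|−γ)⁻¹` generates a
γ-contractive one-parameter group `(W_t)`: `W_0 = id`, `W_{s+t} = W_s W_t`, `t ↦ W_t φ` is
continuous, differentiable with derivative `A W_t φ` for `φ ∈ D(A)`, and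
`‖W_t φ‖ ≤ e^{γ|t|}‖φ‖`. -/
theorem hille_yosida_group
    {B : Type*} [NormedAddCommGroup B] [NormedSpace ℝ B] [CompleteSpace B]
    (p : Submodule ℝ B) (A : p →ₗ[ℝ] B) (γ : ℝ) (hγ : 0 ≤ γ)
    (hdense : Dense (p : Set B))
    (hclosed : ∀ (u : ℕ → p) (x y : B),
      Filter.Tendsto (fun n => ((u n : B))) Filter.atTop (nhds x) →
      Filter.Tendsto (fun n => A (u n)) Filter.atTop (nhds y) →
      ∃ hx : x ∈ p, A ⟨x, hx⟩ = y)
    (hres : ∀ lam : ℝ, γ < |lam| →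
      Function.Bijective (fun u : p => lam • (u : B) - A u) ∧
      ∀ u : p, (|lam| - γ) * ‖(u : B)‖ ≤ ‖lam • (u : B) - A u‖) :
    ∃ W : ℝ → B →L[ℝ] B,
      W 0 = ContinuousLinearMap.id ℝ B ∧
      (∀ s t, W (s + t) = (W s).comp (W t)) ∧
      (∀ φ : B, Continuous fun t => W t φ) ∧
      (∀ (t : ℝ) (φ : B), ‖W t φ‖ ≤ Real.exp (γ * |t|) * ‖φ‖) ∧
      (∀ φ : p, ∀ t : ℝ, ∃ h : (W t (φ : B)) ∈ p,
        HasDerivAt (fun s => W s (φ : B)) (A ⟨W t (φ : B), h⟩) t) :=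
  hille_yosida_group_general p A γ hγ hdense hres
end
end

section
/- The nonlinearity J of the Maxwell-Lorentz system satisfies a weighted linear growth bound: there exists a continuous non-decreasing function C_J of the quantities ‖ρᵢ/√w‖_{L²} and ‖ρᵢ‖_{L²_w} such that for every φ = (qᵢ,pᵢ,Eᵢ,Bᵢ) ∈ 𝓗_w, ‖J(φ)‖_{𝓗_w} ≤ C_J · Σᵢ (1 + C_w‖qᵢ‖)^{P_w} · ‖φ‖_{𝓗_w} (using that the relativistic velocity satisfies ‖v(p)‖ ≤ 1 and ‖Dv(p)‖ ≤ 2/|m|). -/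
open Real MeasureTheory
noncomputable section
/-- Cross product on ℝ³. -/
noncomputable def crossE (a b : E3) : E3 :=
  (EuclideanSpace.equiv (Fin 3) ℝ).symm
    ![a 1 * b 2 - a 2 * b 1, a 2 * b 0 - a 0 * b 2, a 0 * b 1 - a 1 * b 0]
/-- The relativistic velocity `v(p) = σ p / √(m² + p²)`. -/
noncomputable def vmap (σ m : ℝ) (p : E3) : E3 :=
  (σ / Real.sqrt (m ^ 2 + ‖p‖ ^ 2)) • p

lemma norm_crossE_le (a b : E3) : ‖crossE a b‖ ≤ ‖a‖ * ‖b‖ := by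
  rw [EuclideanSpace.norm_eq, EuclideanSpace.norm_eq, EuclideanSpace.norm_eq,
      ← Real.sqrt_mul (by positivity)]
  apply Real.sqrt_le_sqrt
  have h : ∀ i, crossE a b i = ![a 1 * b 2 - a 2 * b 1, a 2 * b 0 - a 0 * b 2, a 0 * b 1 - a 1 * b 0] i := fun _ => rfl
  simp only [h, Fin.sum_univ_three, Real.norm_eq_abs, sq_abs,
    Matrix.cons_val_zero, Matrix.cons_val_one, Matrix.head_cons, Matrix.cons_val_two, Matrix.tail_cons]
  nlinarith [sq_nonneg (a 0 * b 0 + a 1 * b 1 + a 2 * b 2), sq_nonneg (a 0 * b 1 - a 1 * b 0)]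

lemma norm_vmap_eq {σ : ℝ} (m : ℝ) (hσ : |σ| = 1) (p : E3) :
    ‖vmap σ m p‖ = ‖p‖ / Real.sqrt (m ^ 2 + ‖p‖ ^ 2) := by
  rw [vmap, norm_smul, Real.norm_eq_abs, abs_div, hσ, abs_of_nonneg (Real.sqrt_nonneg _)]
  ring

lemma norm_vmap_le_one {σ m : ℝ} (hm : m ≠ 0) (hσ : |σ| = 1) (p : E3) :
    ‖vmap σ m p‖ ≤ 1 := by
  rw [norm_vmap_eq m hσ]
  have h1 : ‖p‖ ≤ Real.sqrt (m ^ 2 + ‖p‖ ^ 2) :=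
    (Real.le_sqrt (norm_nonneg _) (by positivity)).2 (by nlinarith [sq_nonneg m])
  have h2 : (0:ℝ) < Real.sqrt (m ^ 2 + ‖p‖ ^ 2) := Real.sqrt_pos.2 (by positivity)
  rw [div_le_one h2]; exact h1

lemma norm_vmap_le {σ m : ℝ} (hm : m ≠ 0) (hσ : |σ| = 1) (p : E3) :
    ‖vmap σ m p‖ ≤ ‖p‖ / |m| := by
  rw [norm_vmap_eq m hσ]
  have h1 : |m| ≤ Real.sqrt (m ^ 2 + ‖p‖ ^ 2) := by
    exact (Real.le_sqrt (abs_nonneg _) (by positivity)).2 (by nlinarith [sq_nonneg ‖p‖, sq_abs m])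
  have h2 : (0:ℝ) < |m| := abs_pos.2 hm
  gcongr


variable {w : E3 → ℝ} {Cw : ℝ} {Pw : ℕ} {ρ : E3 → ℝ}

lemma translate_weight_bound (hw : Continuous w) (hpos : ∀ x, 0 < w x)
    (hgrow : ∀ x y, w (x + y) ≤ (1 + Cw * ‖y‖) ^ Pw * w x)
    (hρ : Continuous ρ) (hρc : HasCompactSupport ρ) (q : E3) :
    ∫ x, w x * (ρ (x - q))^2 ≤ (1 + Cw * ‖q‖) ^ Pw * ∫ x, w x * (ρ x)^2 := by
  have key : (fun x : E3 => w x * (ρ (x - q))^2)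
      = fun x => (fun y => w (y + q) * (ρ y)^2) (x - q) := by
    funext x; simp [sub_add_cancel]
  have hc1 : Continuous fun y : E3 => w (y + q) * (ρ y)^2 :=
    (hw.comp (continuous_id.add continuous_const)).mul (hρ.pow 2)
  have hs1 : HasCompactSupport fun y : E3 => w (y + q) * (ρ y)^2 := by
    have h : (fun y : E3 => w (y + q) * (ρ y)^2)
        = (fun y : E3 => ρ y) * (fun y => w (y + q) * ρ y) := by
      funext y; simp only [Pi.mul_apply]; ring
    rw [h]; exact hρc.mul_right
  have hc2 : Continuous fun y : E3 => (1 + Cw * ‖q‖) ^ Pw * (w y * (ρ y)^2) :=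
    (continuous_const.mul (hw.mul (hρ.pow 2)))
  have hs2 : HasCompactSupport fun y : E3 => (1 + Cw * ‖q‖) ^ Pw * (w y * (ρ y)^2) := by
    have h : (fun y : E3 => (1 + Cw * ‖q‖) ^ Pw * (w y * (ρ y)^2))
        = (fun y : E3 => ρ y) * (fun y => (1 + Cw * ‖q‖) ^ Pw * (w y * ρ y)) := by
      funext y; simp only [Pi.mul_apply]; ring
    rw [h]; exact hρc.mul_right
  calc ∫ x, w x * (ρ (x - q))^2
      = ∫ x, (fun y => w (y + q) * (ρ y)^2) (x - q) := by rw [key]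
    _ = ∫ y, w (y + q) * (ρ y)^2 := by
        simpa using integral_sub_right_eq_self (μ := volume) (fun y => w (y + q) * (ρ y)^2) q
    _ ≤ ∫ y, (1 + Cw * ‖q‖) ^ Pw * (w y * (ρ y)^2) := by
        refine integral_mono (hc1.integrable_of_hasCompactSupport hs1)
          (hc2.integrable_of_hasCompactSupport hs2) fun y => ?_
        have := hgrow y q
        nlinarith [sq_nonneg (ρ y), (hpos y).le, (hpos (y+q)).le]
    _ = (1 + Cw * ‖q‖) ^ Pw * ∫ y, w y * (ρ y)^2 := integral_const_mul _ _

lemma translate_invweight_bound (hw : Continuous w) (hpos : ∀ x, 0 < w x) (hCw : 0 ≤ Cw)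
    (hgrow : ∀ x y, w (x + y) ≤ (1 + Cw * ‖y‖) ^ Pw * w x)
    (hρ : Continuous ρ) (hρc : HasCompactSupport ρ) (q : E3) :
    ∫ x, (ρ (x - q))^2 / w x ≤ (1 + Cw * ‖q‖) ^ Pw * ∫ x, (ρ x)^2 / w x := by
  have key : (fun x : E3 => (ρ (x - q))^2 / w x)
      = fun x => (fun y => (ρ y)^2 / w (y + q)) (x - q) := by
    funext x; simp [sub_add_cancel]
  have hc1 : Continuous fun y : E3 => (ρ y)^2 / w (y + q) :=
    (hρ.pow 2).div (hw.comp (continuous_id.add continuous_const))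
      (fun y => (hpos _).ne')
  have hs1 : HasCompactSupport fun y : E3 => (ρ y)^2 / w (y + q) := by
    have : (fun y : E3 => (ρ y)^2 / w (y + q)) = (fun y : E3 => ρ y) * (fun y => ρ y / w (y + q)) := by
      funext y; simp [sq]; ring
    rw [this]; exact hρc.mul_right
  have hc2 : Continuous fun y : E3 => (1 + Cw * ‖q‖) ^ Pw * ((ρ y)^2 / w y) :=
    continuous_const.mul ((hρ.pow 2).div hw fun y => (hpos _).ne')
  have hs2 : HasCompactSupport fun y : E3 => (1 + Cw * ‖q‖) ^ Pw * ((ρ y)^2 / w y) := by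
    have : (fun y : E3 => (1 + Cw * ‖q‖) ^ Pw * ((ρ y)^2 / w y))
        = (fun y : E3 => ρ y) * (fun y => (1 + Cw * ‖q‖) ^ Pw * (ρ y / w y)) := by
      funext y; simp [sq]; ring
    rw [this]; exact hρc.mul_right
  have hgpos : (0:ℝ) < (1 + Cw * ‖q‖) ^ Pw :=
    pow_pos (by positivity) _
  calc ∫ x, (ρ (x - q))^2 / w x
      = ∫ x, (fun y => (ρ y)^2 / w (y + q)) (x - q) := by rw [key]
    _ = ∫ y, (ρ y)^2 / w (y + q) := by
        simpa using integral_sub_right_eq_self (μ := volume) (fun y => (ρ y)^2 / w (y + q)) q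
    _ ≤ ∫ y, (1 + Cw * ‖q‖) ^ Pw * ((ρ y)^2 / w y) := by
        refine integral_mono (hc1.integrable_of_hasCompactSupport hs1)
          (hc2.integrable_of_hasCompactSupport hs2) fun y => ?_
        have h1 : w y ≤ (1 + Cw * ‖q‖) ^ Pw * w (y + q) := by
          have := hgrow (y + q) (-q)
          simpa [add_neg_cancel_right, norm_neg] using this
        have h2 : (ρ y)^2 / w (y + q) ≤ (1 + Cw * ‖q‖) ^ Pw * (ρ y)^2 / w y := by
          rw [div_le_div_iff₀ (hpos _) (hpos _)]
          nlinarith [sq_nonneg (ρ y), (hpos y).le, (hpos (y+q)).le]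
        calc (ρ y)^2 / w (y + q) ≤ (1 + Cw * ‖q‖) ^ Pw * (ρ y)^2 / w y := h2
          _ = (1 + Cw * ‖q‖) ^ Pw * ((ρ y)^2 / w y) := by ring
    _ = (1 + Cw * ‖q‖) ^ Pw * ∫ y, (ρ y)^2 / w y := integral_const_mul _ _


variable {w : E3 → ℝ}

lemma weighted_CS (hw : Continuous w) (hpos : ∀ x, 0 < w x)
    (g : E3 → ℝ) (hg : Continuous g) (hgc : HasCompactSupport g)
    {F : E3 → E3} (hF : AEStronglyMeasurable F volume)
    (hFw : Integrable (fun x => w x * ‖F x‖^2)) :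
    Integrable (fun x => |g x| * ‖F x‖) ∧
    ∫ x, |g x| * ‖F x‖ ≤
      Real.sqrt (∫ x, (g x)^2 / w x) * Real.sqrt (∫ x, w x * ‖F x‖^2) := by
  set u : E3 → ℝ := fun x => |g x| / Real.sqrt (w x) with hu_def
  set v : E3 → ℝ := fun x => Real.sqrt (w x) * ‖F x‖ with hv_def
  have hsqrt_pos : ∀ x, 0 < Real.sqrt (w x) := fun x => Real.sqrt_pos.2 (hpos x)
  have huv : ∀ x, u x * v x = |g x| * ‖F x‖ := by
    intro x
    simp only [hu_def, hv_def]
    field_simp [hu_def, hv_def, (hsqrt_pos x).ne']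
  have hu_cont : Continuous u :=
    hg.abs.div (Real.continuous_sqrt.comp hw) fun x => (hsqrt_pos x).ne'
  have hu_supp : HasCompactSupport u := by
    have h : u = (fun x => g x) * fun x => |g x| / g x / Real.sqrt (w x) := by
      funext x
      by_cases hx : g x = 0
      · simp [hu_def, hx]
      · simp only [Pi.mul_apply, hu_def]
        rw [div_div]
        rw [mul_div_assoc', mul_comm (g x) |g x|, mul_comm (g x) (Real.sqrt (w x))]
        rw [mul_div_mul_right _ _ hx]
    rw [h]; exact hgc.mul_right
  have hu2 : MemLp u 2 volume := hu_cont.memLp_of_hasCompactSupport hu_supp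
  have hv_meas : AEStronglyMeasurable v volume :=
    ((Real.continuous_sqrt.comp hw).aestronglyMeasurable).mul hF.norm
  have hv_sq : (fun x => ‖v x‖ ^ 2) = fun x => w x * ‖F x‖^2 := by
    funext x
    rw [hv_def]
    rw [norm_of_nonneg (by positivity), mul_pow, Real.sq_sqrt (hpos x).le]
  have hv2 : MemLp v 2 volume := by
    rw [memLp_two_iff_integrable_sq_norm hv_meas, hv_sq]; exact hFw
  have hint : Integrable (fun x => |g x| * ‖F x‖) volume := by
    have h1 : MemLp (u • v) 1 volume :=
      hv2.smul hu2 (hpqr := ⟨by simp [ENNReal.inv_two_add_inv_two]⟩)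
    have h2 : Integrable (u • v) volume := memLp_one_iff_integrable.1 h1
    exact h2.congr (Filter.Eventually.of_forall fun x => huv x)
  refine ⟨hint, ?_⟩
  have hpq : Real.HolderConjugate 2 2 := Real.HolderConjugate.two_two
  have h2e : (ENNReal.ofReal (2:ℝ)) = (2 : ENNReal) := by
    simp [ENNReal.ofReal_ofNat]
  have hCS := integral_mul_le_Lp_mul_Lq_of_nonneg (μ := volume) hpq
    (Filter.Eventually.of_forall fun x => by positivity : 0 ≤ᵐ[volume] u)
    (Filter.Eventually.of_forall fun x => by positivity : 0 ≤ᵐ[volume] v)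
    (by rw [h2e]; exact hu2) (by rw [h2e]; exact hv2)
  have hu_sq : (fun x => u x ^ (2:ℝ)) = fun x => (g x)^2 / w x := by
    funext x
    rw [show (2:ℝ) = ((2:ℕ):ℝ) by norm_num, Real.rpow_natCast]
    simp [hu_def, div_pow, sq_abs, Real.sq_sqrt (hpos x).le]
  have hv_sq' : (fun x => v x ^ (2:ℝ)) = fun x => w x * ‖F x‖^2 := by
    funext x
    rw [show (2:ℝ) = ((2:ℕ):ℝ) by norm_num, Real.rpow_natCast]
    simp [hv_def, mul_pow, Real.sq_sqrt (hpos x).le]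
  calc ∫ x, |g x| * ‖F x‖ = ∫ x, u x * v x := by
        exact integral_congr_ae (Filter.Eventually.of_forall fun x => (huv x).symm)
    _ ≤ (∫ x, u x ^ (2:ℝ)) ^ ((1:ℝ)/2) * (∫ x, v x ^ (2:ℝ)) ^ ((1:ℝ)/2) := hCS
    _ = Real.sqrt (∫ x, (g x)^2 / w x) * Real.sqrt (∫ x, w x * ‖F x‖^2) := by
        rw [hu_sq, hv_sq']
        rw [Real.sqrt_eq_rpow, Real.sqrt_eq_rpow]

/-- Weighted linear growth bound for the Maxwell–Lorentz nonlinearity `J`: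
`‖J(φ)‖_{𝓗_w} ≤ C_J · Σᵢ (1+C_w‖qᵢ‖)^{P_w} · ‖φ‖_{𝓗_w}`. -/
theorem J_weighted_linear_growth
    (N : ℕ) (w : E3 → ℝ)
    (hsmooth : ContDiff ℝ (⊤ : ℕ∞) w) (hpos : ∀ x, 0 < w x)
    (Cw : ℝ) (hCw : 0 ≤ Cw) (Pw : ℕ)
    (hgrow : ∀ x y, w (x + y) ≤ (1 + Cw * ‖y‖) ^ Pw * w x)
    (ρ : Fin N → E3 → ℝ) (hρ : ∀ i, ContDiff ℝ (⊤ : ℕ∞) (ρ i))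
    (hρc : ∀ i, HasCompactSupport (ρ i))
    (m σ : Fin N → ℝ) (hm : ∀ i, m i ≠ 0) (hσ : ∀ i, |σ i| = 1)
    (e : Fin N → Fin N → ℝ) :
    ∃ CJ : ℝ, 0 ≤ CJ ∧
      ∀ (q p : Fin N → E3) (Ef Bf : Fin N → E3 → E3),
        (∀ i, AEStronglyMeasurable (Ef i) volume ∧
              Integrable (fun x => w x * ‖Ef i x‖ ^ 2) ∧
              AEStronglyMeasurable (Bf i) volume ∧
              Integrable (fun x => w x * ‖Bf i x‖ ^ 2)) →
        Real.sqrt (∑ i, (‖vmap (σ i) (m i) (p i)‖ ^ 2 +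
            ‖∑ j, e i j • ∫ x, ρ i (x - q i) •
                (Ef j x + crossE (vmap (σ i) (m i) (p i)) (Bf j x))‖ ^ 2 +
            ∫ x, w x * ‖(-(4 * π)) • (ρ i (x - q i) • vmap (σ i) (m i) (p i))‖ ^ 2)) ≤
          CJ * (∑ i, (1 + Cw * ‖q i‖) ^ Pw) *
            Real.sqrt (∑ i, (‖q i‖ ^ 2 + ‖p i‖ ^ 2 +
              (∫ x, w x * ‖Ef i x‖ ^ 2) + ∫ x, w x * ‖Bf i x‖ ^ 2)) := by
  classical
  have hwc : Continuous w := hsmooth.continuous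
  obtain ⟨K, hKdef⟩ : ∃ K : Fin N → ℝ, K = fun i => ∫ x, w x * (ρ i x)^2 := ⟨_, rfl⟩
  obtain ⟨L, hLdef⟩ : ∃ L : Fin N → ℝ, L = fun i => ∫ x, (ρ i x)^2 / w x := ⟨_, rfl⟩
  have hK0 : ∀ i, 0 ≤ K i := fun i => by
    rw [hKdef]
    exact integral_nonneg fun x => mul_nonneg (hpos x).le (sq_nonneg _)
  have hL0 : ∀ i, 0 ≤ L i := fun i => by
    rw [hLdef]
    exact integral_nonneg fun x => div_nonneg (sq_nonneg _) (hpos x).le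
  obtain ⟨c, hcdef⟩ : ∃ c : Fin N → ℝ,
      c = fun i => (1 + (4*π)^2 * K i) / (m i)^2 + 4 * L i * (∑ j, |e i j|)^2 := ⟨_, rfl⟩
  have hc0 : ∀ i, 0 ≤ c i := by
    intro i
    have hKi := hK0 i
    have hLi := hL0 i
    have h1 : (0:ℝ) ≤ (1 + (4*π)^2 * K i) / (m i)^2 := by positivity
    have h2 : (0:ℝ) ≤ 4 * L i * (∑ j, |e i j|)^2 := by positivity
    simp only [hcdef]
    linarith
  have hcsum : (0:ℝ) ≤ ∑ i, c i := Finset.sum_nonneg fun i _ => hc0 i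
  obtain ⟨CJ, hCJdef⟩ : ∃ CJ : ℝ, CJ = Real.sqrt (∑ i, c i) := ⟨_, rfl⟩
  refine ⟨CJ, hCJdef ▸ Real.sqrt_nonneg _, ?_⟩
  intro q p Ef Bf hEB
  obtain ⟨G, hGdef⟩ : ∃ G : ℝ, G = ∑ i, (1 + Cw * ‖q i‖) ^ Pw := ⟨_, rfl⟩
  obtain ⟨S, hSdef⟩ : ∃ S : ℝ, S = ∑ i, (‖q i‖ ^ 2 + ‖p i‖ ^ 2 +
      (∫ x, w x * ‖Ef i x‖ ^ 2) + ∫ x, w x * ‖Bf i x‖ ^ 2) := ⟨_, rfl⟩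
  rw [← hGdef, ← hSdef]
  have hBnn : ∀ i, (0:ℝ) ≤ ‖q i‖ ^ 2 + ‖p i‖ ^ 2 +
      (∫ x, w x * ‖Ef i x‖ ^ 2) + ∫ x, w x * ‖Bf i x‖ ^ 2 := by
    intro i
    have h1 : (0:ℝ) ≤ ∫ x, w x * ‖Ef i x‖ ^ 2 :=
      integral_nonneg fun x => mul_nonneg (hpos x).le (sq_nonneg _)
    have h2 : (0:ℝ) ≤ ∫ x, w x * ‖Bf i x‖ ^ 2 :=
      integral_nonneg fun x => mul_nonneg (hpos x).le (sq_nonneg _)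
    have h3 : (0:ℝ) ≤ ‖q i‖ ^ 2 := sq_nonneg _
    have h4 : (0:ℝ) ≤ ‖p i‖ ^ 2 := sq_nonneg _
    linarith
  have hS0 : (0:ℝ) ≤ S := hSdef ▸ Finset.sum_nonneg fun i _ => hBnn i
  have hg1 : ∀ i, (1:ℝ) ≤ (1 + Cw * ‖q i‖) ^ Pw := by
    intro i
    apply one_le_pow₀
    have : (0:ℝ) ≤ Cw * ‖q i‖ := mul_nonneg hCw (norm_nonneg _)
    linarith
  have hgG : ∀ i, (1 + Cw * ‖q i‖) ^ Pw ≤ G := fun i => hGdef ▸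
    Finset.single_le_sum (f := fun j => (1 + Cw * ‖q j‖) ^ Pw)
      (fun j _ => le_trans zero_le_one (hg1 j)) (Finset.mem_univ i)
  have hG0 : (0:ℝ) ≤ G := hGdef ▸
    Finset.sum_nonneg fun i _ => le_trans zero_le_one (hg1 i)
  have hG1 : ∀ _i : Fin N, (1:ℝ) ≤ G := fun i => (hg1 i).trans (hgG i)
  have hgG2 : ∀ i, (1 + Cw * ‖q i‖) ^ Pw ≤ G^2 := by
    intro i
    calc (1 + Cw * ‖q i‖) ^ Pw ≤ G := hgG i
      _ = G * 1 := (mul_one G).symm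
      _ ≤ G * G := mul_le_mul_of_nonneg_left (hG1 i) hG0
      _ = G^2 := (sq G).symm
  have hBS : ∀ i, ‖q i‖ ^ 2 + ‖p i‖ ^ 2 +
      (∫ x, w x * ‖Ef i x‖ ^ 2) + (∫ x, w x * ‖Bf i x‖ ^ 2) ≤ S :=
    fun i => hSdef ▸ Finset.single_le_sum (fun j _ => hBnn j) (Finset.mem_univ i)
  have hEnn : ∀ i, (0:ℝ) ≤ ∫ x, w x * ‖Ef i x‖ ^ 2 := fun i =>
    integral_nonneg fun x => mul_nonneg (hpos x).le (sq_nonneg _)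
  have hBnn' : ∀ i, (0:ℝ) ≤ ∫ x, w x * ‖Bf i x‖ ^ 2 := fun i =>
    integral_nonneg fun x => mul_nonneg (hpos x).le (sq_nonneg _)
  have hpS : ∀ i, ‖p i‖ ^ 2 ≤ S := by
    intro i
    have := hBS i
    nlinarith [sq_nonneg ‖q i‖, hEnn i, hBnn' i]
  have hES : ∀ i, (∫ x, w x * ‖Ef i x‖ ^ 2) ≤ S := by
    intro i
    have := hBS i
    nlinarith [sq_nonneg ‖q i‖, sq_nonneg ‖p i‖, hBnn' i]
  have hBSint : ∀ i, (∫ x, w x * ‖Bf i x‖ ^ 2) ≤ S := by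
    intro i
    have := hBS i
    nlinarith [sq_nonneg ‖q i‖, sq_nonneg ‖p i‖, hEnn i]
  have key : ∀ i : Fin N, ‖vmap (σ i) (m i) (p i)‖ ^ 2 +
      ‖∑ j, e i j • ∫ x, ρ i (x - q i) •
          (Ef j x + crossE (vmap (σ i) (m i) (p i)) (Bf j x))‖ ^ 2 +
      (∫ x, w x * ‖(-(4 * π)) • (ρ i (x - q i) • vmap (σ i) (m i) (p i))‖ ^ 2) ≤
      c i * (G^2 * S) := by
    intro i
    set v := vmap (σ i) (m i) (p i) with hvdef
    have hρic : Continuous (ρ i) := (hρ i).continuous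
    have hv1 : ‖v‖ ≤ 1 := norm_vmap_le_one (hm i) (hσ i) _
    have hvp : ‖v‖ ≤ ‖p i‖ / |m i| := norm_vmap_le (hm i) (hσ i) _
    have hm2 : (0:ℝ) < (m i)^2 := by
      have := hm i; positivity
    have hv2 : ‖v‖^2 ≤ ‖p i‖^2 / (m i)^2 := by
      have := pow_le_pow_left₀ (norm_nonneg v) hvp 2
      rwa [div_pow, sq_abs] at this
    have hvS : ‖v‖^2 ≤ S / (m i)^2 := by
      refine hv2.trans ?_
      gcongr
      exact hpS i
    have h1G2 : (1:ℝ) ≤ G^2 := by nlinarith [hG1 i, hG0]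
    have hG2S : S ≤ G^2 * S := by nlinarith [hS0, h1G2]
    -- third term
    have e3 : (fun x => w x * ‖(-(4 * π)) • (ρ i (x - q i) • v)‖ ^ 2)
        = fun x => ((4*π)^2 * ‖v‖^2) * (w x * (ρ i (x - q i))^2) := by
      funext x
      rw [norm_smul, norm_smul, Real.norm_eq_abs, Real.norm_eq_abs, abs_neg,
        abs_of_nonneg (by positivity : (0:ℝ) ≤ 4*π)]
      simp only [mul_pow, sq_abs]
      ring
    have hwt : ∫ x, w x * (ρ i (x - q i))^2 ≤ (1 + Cw * ‖q i‖) ^ Pw * K i := by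
      simp only [hKdef]
      exact translate_weight_bound hwc hpos hgrow hρic (hρc i) (q i)
    have T3 : (∫ x, w x * ‖(-(4 * π)) • (ρ i (x - q i) • v)‖ ^ 2)
        ≤ (4*π)^2 * ‖v‖^2 * ((1 + Cw * ‖q i‖) ^ Pw * K i) := by
      rw [e3, integral_const_mul]
      exact mul_le_mul_of_nonneg_left hwt (by positivity)
    -- interaction term
    have hgq_cont : Continuous fun x : E3 => ρ i (x - q i) :=
      hρic.comp (continuous_id.sub continuous_const)
    have hgq_supp : HasCompactSupport fun x : E3 => ρ i (x - q i) :=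
      (hρc i).comp_homeomorph (Homeomorph.subRight (q i))
    have hinv : ∫ x, (ρ i (x - q i))^2 / w x ≤ (1 + Cw * ‖q i‖) ^ Pw * L i := by
      simp only [hLdef]
      exact translate_invweight_bound hwc hpos hCw hgrow hρic (hρc i) (q i)
    have h0g : (0:ℝ) ≤ (1 + Cw * ‖q i‖) ^ Pw := le_trans zero_le_one (hg1 i)
    have hgL : (0:ℝ) ≤ (1 + Cw * ‖q i‖) ^ Pw * L i := mul_nonneg h0g (hL0 i)
    have hIj : ∀ j, ‖∫ x, ρ i (x - q i) • (Ef j x + crossE v (Bf j x))‖ ≤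
        Real.sqrt ((1 + Cw * ‖q i‖) ^ Pw * L i) * (2 * Real.sqrt S) := by
      intro j
      obtain ⟨hEm, hEi, hBm, hBi⟩ := hEB j
      obtain ⟨hintE, hcsE⟩ := weighted_CS hwc hpos _ hgq_cont hgq_supp hEm hEi
      obtain ⟨hintB, hcsB⟩ := weighted_CS hwc hpos _ hgq_cont hgq_supp hBm hBi
      have hsqL : Real.sqrt (∫ x, (ρ i (x - q i))^2 / w x) ≤
          Real.sqrt ((1 + Cw * ‖q i‖) ^ Pw * L i) := Real.sqrt_le_sqrt hinv
      have hsqE : Real.sqrt (∫ x, w x * ‖Ef j x‖^2) ≤ Real.sqrt S :=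
        Real.sqrt_le_sqrt (hES j)
      have hsqB : Real.sqrt (∫ x, w x * ‖Bf j x‖^2) ≤ Real.sqrt S :=
        Real.sqrt_le_sqrt (hBSint j)
      calc ‖∫ x, ρ i (x - q i) • (Ef j x + crossE v (Bf j x))‖
          ≤ ∫ x, ‖ρ i (x - q i) • (Ef j x + crossE v (Bf j x))‖ :=
            norm_integral_le_integral_norm _
        _ ≤ ∫ x, (|ρ i (x - q i)| * ‖Ef j x‖ + |ρ i (x - q i)| * ‖Bf j x‖) := by
            refine integral_mono_of_nonneg
              (Filter.Eventually.of_forall fun x => norm_nonneg _)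
              (hintE.add hintB)
              (Filter.Eventually.of_forall fun x => ?_)
            simp only
            rw [norm_smul, Real.norm_eq_abs]
            have h1 : ‖Ef j x + crossE v (Bf j x)‖ ≤ ‖Ef j x‖ + ‖Bf j x‖ := by
              refine (norm_add_le _ _).trans ?_
              have := (norm_crossE_le v (Bf j x)).trans
                (mul_le_of_le_one_left (norm_nonneg _) hv1)
              linarith
            calc |ρ i (x - q i)| * ‖Ef j x + crossE v (Bf j x)‖
                ≤ |ρ i (x - q i)| * (‖Ef j x‖ + ‖Bf j x‖) :=
                  mul_le_mul_of_nonneg_left h1 (abs_nonneg _)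
              _ = |ρ i (x - q i)| * ‖Ef j x‖ + |ρ i (x - q i)| * ‖Bf j x‖ := by ring
        _ = (∫ x, |ρ i (x - q i)| * ‖Ef j x‖) + ∫ x, |ρ i (x - q i)| * ‖Bf j x‖ :=
            integral_add hintE hintB
        _ ≤ Real.sqrt ((1 + Cw * ‖q i‖) ^ Pw * L i) * Real.sqrt S
            + Real.sqrt ((1 + Cw * ‖q i‖) ^ Pw * L i) * Real.sqrt S := by
            have b1 := hcsE.trans
              (mul_le_mul hsqL hsqE (Real.sqrt_nonneg _) (Real.sqrt_nonneg _))
            have b2 := hcsB.trans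
              (mul_le_mul hsqL hsqB (Real.sqrt_nonneg _) (Real.sqrt_nonneg _))
            linarith
        _ = Real.sqrt ((1 + Cw * ‖q i‖) ^ Pw * L i) * (2 * Real.sqrt S) := by ring
    have T2 : ‖∑ j, e i j • ∫ x, ρ i (x - q i) • (Ef j x + crossE v (Bf j x))‖ ≤
        (∑ j, |e i j|) *
          (Real.sqrt ((1 + Cw * ‖q i‖) ^ Pw * L i) * (2 * Real.sqrt S)) := by
      calc ‖∑ j, e i j • ∫ x, ρ i (x - q i) • (Ef j x + crossE v (Bf j x))‖
          ≤ ∑ j, ‖e i j • ∫ x, ρ i (x - q i) • (Ef j x + crossE v (Bf j x))‖ :=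
            norm_sum_le _ _
        _ ≤ ∑ j, |e i j| *
              (Real.sqrt ((1 + Cw * ‖q i‖) ^ Pw * L i) * (2 * Real.sqrt S)) := by
            refine Finset.sum_le_sum fun j _ => ?_
            rw [norm_smul, Real.norm_eq_abs]
            exact mul_le_mul_of_nonneg_left (hIj j) (abs_nonneg _)
        _ = (∑ j, |e i j|) *
              (Real.sqrt ((1 + Cw * ‖q i‖) ^ Pw * L i) * (2 * Real.sqrt S)) :=
            (Finset.sum_mul _ _ _).symm
    have hsqid : ((∑ j, |e i j|) *
          (Real.sqrt ((1 + Cw * ‖q i‖) ^ Pw * L i) * (2 * Real.sqrt S)))^2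
        = (∑ j, |e i j|)^2 * ((1 + Cw * ‖q i‖) ^ Pw * L i) * (4 * S) := by
      rw [mul_pow, mul_pow, mul_pow, Real.sq_sqrt hgL, Real.sq_sqrt hS0]
      ring
    have hb2 : ‖∑ j, e i j • ∫ x, ρ i (x - q i) • (Ef j x + crossE v (Bf j x))‖^2 ≤
        4 * L i * (∑ j, |e i j|)^2 * (G^2 * S) := by
      have h := pow_le_pow_left₀ (norm_nonneg _) T2 2
      rw [hsqid] at h
      refine h.trans ?_
      have h1 : (1 + Cw * ‖q i‖) ^ Pw * L i ≤ G^2 * L i :=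
        mul_le_mul_of_nonneg_right (hgG2 i) (hL0 i)
      calc (∑ j, |e i j|)^2 * ((1 + Cw * ‖q i‖) ^ Pw * L i) * (4 * S)
          ≤ (∑ j, |e i j|)^2 * (G^2 * L i) * (4 * S) := by
            exact mul_le_mul_of_nonneg_right
              (mul_le_mul_of_nonneg_left h1 (sq_nonneg _))
              (by linarith [hS0] : (0:ℝ) ≤ 4 * S)
        _ = 4 * L i * (∑ j, |e i j|)^2 * (G^2 * S) := by ring
    have hb1 : ‖v‖^2 ≤ 1/(m i)^2 * (G^2 * S) := by
      rw [one_div_mul_eq_div]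
      exact hvS.trans (by gcongr)
    have hb3 : (∫ x, w x * ‖(-(4 * π)) • (ρ i (x - q i) • v)‖ ^ 2) ≤
        (4*π)^2 * K i / (m i)^2 * (G^2 * S) := by
      refine T3.trans ?_
      have h1 : (1 + Cw * ‖q i‖) ^ Pw * K i ≤ G^2 * K i :=
        mul_le_mul_of_nonneg_right (hgG2 i) (hK0 i)
      have hSm : (0:ℝ) ≤ S / (m i)^2 := div_nonneg hS0 hm2.le
      calc (4*π)^2 * ‖v‖^2 * ((1 + Cw * ‖q i‖) ^ Pw * K i)
          ≤ (4*π)^2 * (S/(m i)^2) * (G^2 * K i) := by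
            exact mul_le_mul (mul_le_mul_of_nonneg_left hvS (by positivity)) h1
              (mul_nonneg h0g (hK0 i)) (mul_nonneg (by positivity) hSm)
        _ = (4*π)^2 * K i / (m i)^2 * (G^2 * S) := by ring
    calc ‖v‖ ^ 2 +
        ‖∑ j, e i j • ∫ x, ρ i (x - q i) • (Ef j x + crossE v (Bf j x))‖ ^ 2 +
        (∫ x, w x * ‖(-(4 * π)) • (ρ i (x - q i) • v)‖ ^ 2)
        ≤ 1/(m i)^2 * (G^2 * S) + 4 * L i * (∑ j, |e i j|)^2 * (G^2 * S)
          + (4*π)^2 * K i / (m i)^2 * (G^2 * S) := by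
          have := hb1; have := hb2; have := hb3; linarith
      _ = c i * (G^2 * S) := by
          simp only [hcdef]
          field_simp
          ring
  have hsum : (∑ i, (‖vmap (σ i) (m i) (p i)‖ ^ 2 +
      ‖∑ j, e i j • ∫ x, ρ i (x - q i) •
          (Ef j x + crossE (vmap (σ i) (m i) (p i)) (Bf j x))‖ ^ 2 +
      ∫ x, w x * ‖(-(4 * π)) • (ρ i (x - q i) • vmap (σ i) (m i) (p i))‖ ^ 2)) ≤
      (CJ * G)^2 * S := by
    calc (∑ i, (‖vmap (σ i) (m i) (p i)‖ ^ 2 +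
        ‖∑ j, e i j • ∫ x, ρ i (x - q i) •
            (Ef j x + crossE (vmap (σ i) (m i) (p i)) (Bf j x))‖ ^ 2 +
        ∫ x, w x * ‖(-(4 * π)) • (ρ i (x - q i) • vmap (σ i) (m i) (p i))‖ ^ 2))
        ≤ ∑ i, c i * (G^2 * S) := Finset.sum_le_sum fun i _ => key i
      _ = (∑ i, c i) * (G^2 * S) := (Finset.sum_mul _ _ _).symm
      _ = (CJ * G)^2 * S := by
          rw [hCJdef, mul_pow, Real.sq_sqrt hcsum]
          ring
  calc Real.sqrt (∑ i, (‖vmap (σ i) (m i) (p i)‖ ^ 2 +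
      ‖∑ j, e i j • ∫ x, ρ i (x - q i) •
          (Ef j x + crossE (vmap (σ i) (m i) (p i)) (Bf j x))‖ ^ 2 +
      ∫ x, w x * ‖(-(4 * π)) • (ρ i (x - q i) • vmap (σ i) (m i) (p i))‖ ^ 2))
      ≤ Real.sqrt ((CJ * G)^2 * S) := Real.sqrt_le_sqrt hsum
    _ = CJ * G * Real.sqrt S := by
        have hCJ0 : (0:ℝ) ≤ CJ := hCJdef ▸ Real.sqrt_nonneg _
        rw [Real.sqrt_mul (sq_nonneg _), Real.sqrt_sq (mul_nonneg hCJ0 hG0)]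
end
end
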